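/- arXiv:2511.00864 — 15 statements merged into one kernel-verified Lean document; each statement's English description precedes it below -/
import Mathlib

section
/- Let (X, G) be a CR-dynamical system and let k ∈ {0, 1, 2, 3}. If there exists a k-transitive point in (X, G), then every point of X is legal (equivalently, the set of illegal points is empty). -/
open Set Topology

variable {X : Type*}

/-- `GPow G n x` : the set of endpoints of `G`-paths of length `n` starting at `x`,
i.e. `G^n(x)`. -/
def GPow (G : Set (X × X)) (n : ℕ) (x : X) : Set X :=
  {y | ∃ p : ℕ → X, p 0 = x ∧ p n = y ∧ ∀ i < n, (p i, p (i + 1)) ∈ G}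

/-- `u` is a trajectory of `x` in `(X, G)`. -/
def IsTraj (G : Set (X × X)) (x : X) (u : ℕ → X) : Prop :=
  u 0 = x ∧ ∀ n : ℕ, (u n, u (n + 1)) ∈ G

/-- `x` is a legal point: it admits a trajectory. -/
def Legal (G : Set (X × X)) (x : X) : Prop := ∃ u : ℕ → X, IsTraj G x u

/-- The inverse relation `G⁻¹`. -/
def Ginv (G : Set (X × X)) : Set (X × X) := {p | (p.2, p.1) ∈ G}

/-- `T_G(x)* = ⋃ₙ G^n(x)`. -/
def TStar (G : Set (X × X)) (x : X) : Set X := ⋃ n : ℕ, GPow G n x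

/-- The set of `0`-transitive points. -/
def trans0 [TopologicalSpace X] (G : Set (X × X)) : Set X :=
  {x | Legal G x ∧ ∀ U : Set X, IsOpen U → U.Nonempty → ∃ n : ℕ, GPow G n x ⊆ U}

/-- The set of `1`-transitive points. -/
def trans1 [TopologicalSpace X] (G : Set (X × X)) : Set X :=
  {x | Legal G x ∧ ∀ u : ℕ → X, IsTraj G x u → Dense (Set.range u)}

/-- The set of `2`-transitive points. -/
def trans2 [TopologicalSpace X] (G : Set (X × X)) : Set X :=
  {x | ∃ u : ℕ → X, IsTraj G x u ∧ Dense (Set.range u)}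

/-- The set of `3`-transitive points. -/
def trans3 [TopologicalSpace X] (G : Set (X × X)) : Set X :=
  {x | Legal G x ∧ Dense (⋃ u ∈ {u : ℕ → X | IsTraj G x u}, Set.range u)}

lemma legal_shift {G : Set (X × X)} {x : X} {u : ℕ → X} (h : IsTraj G x u) (n : ℕ) :
    Legal G (u n) :=
  ⟨fun k => u (n + k), rfl, fun k => by
    show (u (n + k), u (n + (k + 1))) ∈ G
    rw [← Nat.add_assoc]; exact h.2 (n + k)⟩

lemma legal_closed [TopologicalSpace X] [CompactSpace X] [T2Space X]
    {G : Set (X × X)} (hGc : IsClosed G) : IsClosed {x | Legal G x} := by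
  have hK : IsClosed {u : ℕ → X | ∀ n, (u n, u (n + 1)) ∈ G} := by
    have : {u : ℕ → X | ∀ n, (u n, u (n + 1)) ∈ G} =
        ⋂ n : ℕ, (fun u : ℕ → X => (u n, u (n + 1))) ⁻¹' G := by
      ext u; simp [Set.mem_iInter]
    rw [this]
    exact isClosed_iInter fun n =>
      hGc.preimage (((continuous_apply n).prodMk (continuous_apply (n + 1))))
  have himg : {x : X | Legal G x} = (fun u : ℕ → X => u 0) ''
      {u : ℕ → X | ∀ n, (u n, u (n + 1)) ∈ G} := by
    ext x
    constructor
    · rintro ⟨u, h0, hu⟩; exact ⟨u, hu, h0⟩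
    · rintro ⟨u, hu, h0⟩; exact ⟨u, h0, hu⟩
  rw [himg]
  exact (hK.isCompact.image (continuous_apply 0)).isClosed

lemma legal_of_dense [TopologicalSpace X] [CompactSpace X] [T2Space X]
    {G : Set (X × X)} (hGc : IsClosed G) (hd : Dense {x : X | Legal G x}) :
    ∀ x : X, Legal G x := by
  intro x
  have h := (legal_closed hGc).closure_eq
  have := hd.closure_eq
  have : {x : X | Legal G x} = Set.univ := by rw [← h, this]
  exact Set.eq_univ_iff_forall.mp this x

/-- if there is a `k`-transitive point (`k ∈ {0,1,2,3}`), then every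
point of `X` is legal. -/
theorem stmt0 [MetricSpace X] [CompactSpace X]
    (G : Set (X × X)) (hGc : IsClosed G) (hGne : G.Nonempty) :
    ((trans0 G).Nonempty → ∀ x : X, Legal G x) ∧
    ((trans1 G).Nonempty → ∀ x : X, Legal G x) ∧
    ((trans2 G).Nonempty → ∀ x : X, Legal G x) ∧
    ((trans3 G).Nonempty → ∀ x : X, Legal G x) := by
  refine ⟨?_, ?_, ?_, ?_⟩
  · rintro ⟨x₀, ⟨⟨u, hu⟩, htr⟩⟩
    refine legal_of_dense hGc (dense_iff_inter_open.2 fun U hU hUne => ?_)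
    obtain ⟨n, hn⟩ := htr U hU hUne
    have hun : u n ∈ GPow G n x₀ := ⟨u, hu.1, rfl, fun i _ => hu.2 i⟩
    exact ⟨u n, hn hun, legal_shift hu n⟩
  · rintro ⟨x₀, ⟨⟨u, hu⟩, htr⟩⟩
    refine legal_of_dense hGc ((htr u hu).mono ?_)
    rintro y ⟨n, rfl⟩; exact legal_shift hu n
  · rintro ⟨x₀, ⟨u, hu, hd⟩⟩
    refine legal_of_dense hGc (hd.mono ?_)
    rintro y ⟨n, rfl⟩; exact legal_shift hu n
  · rintro ⟨x₀, ⟨_, hd⟩⟩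
    refine legal_of_dense hGc (hd.mono ?_)
    rintro y hy
    simp only [Set.mem_iUnion] at hy
    obtain ⟨u, hu, n, rfl⟩ := hy
    exact legal_shift hu n
end

section
/- Let (X, G) be a CR-dynamical system such that X has at least one isolated point. If trans_0(G) ≠ ∅, then trans_0(G) contains an isolated point of X. Moreover, if in addition X is infinite, then trans_0(G) contains exactly one isolated point of X. -/
open Set Topology

variable {X : Type*}

lemma gpow_zero (G : Set (X × X)) (x : X) : GPow G 0 x = {x} := by
  ext y
  simp only [GPow, Set.mem_setOf_eq, Set.mem_singleton_iff]
  constructor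
  · rintro ⟨p, h0, he, -⟩; rw [← he, h0]
  · rintro rfl; exact ⟨fun _ => y, rfl, rfl, fun i hi => absurd hi (Nat.not_lt_zero i)⟩

lemma mem_gpow_trans {G : Set (X × X)} {n m : ℕ} {x y z : X}
    (hy : y ∈ GPow G n x) (hz : z ∈ GPow G m y) : z ∈ GPow G (n + m) x := by
  obtain ⟨p, hp0, hpn, hp⟩ := hy
  obtain ⟨q, hq0, hqm, hq⟩ := hz
  refine ⟨fun i => if i < n then p i else q (i - n), ?_, ?_, ?_⟩
  · by_cases h : 0 < n
    · simp only [if_pos h]; exact hp0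
    · have hn : n = 0 := by omega
      subst hn
      simp only [lt_self_iff_false, if_false, Nat.sub_zero]
      rw [hq0, ← hpn]; exact hp0
  · have h : ¬ (n + m < n) := by omega
    simp only [if_neg h, Nat.add_sub_cancel_left]
    exact hqm
  · intro i hi
    by_cases h1 : i + 1 < n
    · have h0 : i < n := by omega
      simp only [if_pos h0, if_pos h1]
      exact hp i h0
    · by_cases h0 : i < n
      · have hn : i + 1 = n := by omega
        simp only [if_pos h0, if_neg h1]
        have he : q (i + 1 - n) = p (i + 1) := by
          rw [hn]; simp only [Nat.sub_self]; rw [hq0, hpn]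
        rw [he]
        exact hp i h0
      · simp only [if_neg h0, if_neg h1]
        have h2 : i + 1 - n = (i - n) + 1 := by omega
        rw [h2]
        exact hq (i - n) (by omega)

lemma gpow_add_decomp {G : Set (X × X)} {n m : ℕ} {x z : X} (hz : z ∈ GPow G (n + m) x) :
    ∃ y, y ∈ GPow G n x ∧ z ∈ GPow G m y := by
  obtain ⟨p, hp0, hpe, hp⟩ := hz
  refine ⟨p n, ⟨p, hp0, rfl, fun i hi => hp i (by omega)⟩,
    ⟨fun i => p (n + i), rfl, hpe, fun i hi => hp (n + i) (by omega)⟩⟩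

lemma gpow_singleton_add {G : Set (X × X)} {n : ℕ} {t a : X} (h : GPow G n t = {a}) (m : ℕ) :
    GPow G (n + m) t = GPow G m a := by
  ext z
  constructor
  · intro hz
    obtain ⟨y, hy, hz'⟩ := gpow_add_decomp hz
    rw [h, Set.mem_singleton_iff] at hy
    rwa [hy] at hz'
  · intro hz
    exact mem_gpow_trans (show a ∈ GPow G n t by rw [h]; exact rfl) hz

lemma gpow_nonempty {G : Set (X × X)} {t : X} (h : Legal G t) (n : ℕ) :
    (GPow G n t).Nonempty := by
  obtain ⟨u, hu⟩ := h
  exact ⟨u n, u, hu.1, rfl, fun i _ => hu.2 i⟩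

lemma legal_of_singleton {G : Set (X × X)} {n : ℕ} {t a : X} (ht : Legal G t)
    (h : GPow G n t = {a}) : Legal G a := by
  obtain ⟨u, hu0, hu⟩ := ht
  have hmem : u n ∈ GPow G n t := ⟨u, hu0, rfl, fun i _ => hu i⟩
  rw [h, Set.mem_singleton_iff] at hmem
  exact ⟨fun k => u (n + k), hmem, fun k => hu (n + k)⟩

lemma shrink [MetricSpace X] {G : Set (X × X)} {t : X} (hleg : Legal G t) {N : ℕ} {U : Set X}
    (hU : IsOpen U)
    (hw : ∀ V : Set X, IsOpen V → V.Nonempty → V ⊆ U → ∃ m, m < N ∧ GPow G m t ⊆ V)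
    {x : X} (hx : x ∈ U) : ∃ m, m < N ∧ GPow G m t = {x} := by
  by_contra hc
  push_neg at hc
  have hy : ∀ m : Fin N, ∃ y, y ∈ GPow G m t ∧ y ≠ x := by
    rintro ⟨m, hm⟩
    obtain ⟨y, hymem⟩ := gpow_nonempty hleg m
    by_cases h : ∃ y, y ∈ GPow G m t ∧ y ≠ x
    · exact h
    · push_neg at h
      exact absurd (Set.eq_singleton_iff_unique_mem.mpr ⟨h y hymem ▸ hymem, h⟩) (hc m hm)
  choose y hy1 hy2 using hy
  have hN0 : 0 < N := by
    obtain ⟨m, hm, -⟩ := hw U hU ⟨x, hx⟩ subset_rfl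
    omega
  haveI : Nonempty (Fin N) := ⟨⟨0, hN0⟩⟩
  set ε := Finset.univ.inf' Finset.univ_nonempty (fun m : Fin N => dist (y m) x) with hε
  have hεpos : 0 < ε := by
    rw [hε, Finset.lt_inf'_iff]
    intro m _
    exact dist_pos.mpr (hy2 m)
  obtain ⟨m, hmN, hms⟩ := hw (Metric.ball x ε ∩ U) (Metric.isOpen_ball.inter hU)
    ⟨x, Metric.mem_ball_self hεpos, hx⟩ inter_subset_right
  have h1 := hms (hy1 ⟨m, hmN⟩)
  have h2 : ε ≤ dist (y ⟨m, hmN⟩) x := Finset.inf'_le _ (Finset.mem_univ _)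
  have h3 : dist (y ⟨m, hmN⟩) x < ε := h1.1
  linarith

lemma exists_isolated [MetricSpace X] (G : Set (X × X)) : ∀ n : ℕ, ∀ t, t ∈ trans0 G →
    ∀ b : X, IsOpen ({b} : Set X) → GPow G n t = {b} →
    ∃ x : X, IsOpen ({x} : Set X) ∧ x ∈ trans0 G := by
  intro n
  induction n using Nat.strong_induction_on with
  | _ n ih =>
  intro t ht b hbo hbe
  by_cases hb : b ∈ trans0 G
  · exact ⟨b, hbo, hb⟩
  have hbl : Legal G b := legal_of_singleton ht.1 hbe
  have hbad : ∃ U : Set X, IsOpen U ∧ U.Nonempty ∧ ∀ k, ¬ GPow G k b ⊆ U := by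
    by_contra hcon
    push_neg at hcon
    exact hb ⟨hbl, fun U hUo hUne => hcon U hUo hUne⟩
  obtain ⟨U, hUo, hUne, hU⟩ := hbad
  have hw : ∀ V : Set X, IsOpen V → V.Nonempty → V ⊆ U → ∃ m, m < n ∧ GPow G m t ⊆ V := by
    intro V hVo hVne hVU
    obtain ⟨m, hm⟩ := ht.2 V hVo hVne
    refine ⟨m, ?_, hm⟩
    by_contra hge
    push_neg at hge
    have heq : GPow G m t = GPow G (m - n) b := by
      have h := gpow_singleton_add hbe (m - n)
      rwa [Nat.add_sub_cancel' hge] at h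
    exact hU (m - n) (by rw [← heq]; exact hm.trans hVU)
  obtain ⟨x, hxU⟩ := hUne
  obtain ⟨m, hmn, hmx⟩ := shrink ht.1 hUo hw hxU
  have hUfin : U.Finite := by
    have hsub : U ⊆ ⋃ k ∈ Finset.range n, {y : X | GPow G k t = {y}} := by
      intro u hu
      obtain ⟨k, hk, hke⟩ := shrink ht.1 hUo hw hu
      exact Set.mem_biUnion (Finset.mem_range.mpr hk) hke
    refine Set.Finite.subset (Set.Finite.biUnion (Finset.range n).finite_toSet ?_) hsub
    intro k _
    apply Set.Subsingleton.finite
    intro a ha a' ha'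
    exact Set.singleton_eq_singleton_iff.mp (ha.symm.trans ha')
  have hxo : IsOpen ({x} : Set X) := by
    have h1 : IsClosed (U \ {x}) := (hUfin.subset Set.diff_subset).isClosed
    have h2 : U \ (U \ {x}) = {x} :=
      Set.diff_diff_cancel_left (Set.singleton_subset_iff.mpr hxU)
    rw [← h2]
    exact hUo.sdiff h1
  exact ih m hmn t ht x hxo hmx

lemma gpow_period {G : Set (X × X)} {t : X} {P : ℕ} (hloop : GPow G P t = {t}) :
    ∀ k m, GPow G (k * P + m) t = GPow G m t := by
  intro k
  induction k with
  | zero => intro m; simp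
  | succ k ihk =>
    intro m
    have h1 : (k + 1) * P + m = P + (k * P + m) := by ring
    rw [h1, gpow_singleton_add hloop, ihk]

lemma gpow_mod {G : Set (X × X)} {t : X} {P : ℕ} (hloop : GPow G P t = {t}) (m : ℕ) :
    GPow G (m % P) t = GPow G m t := by
  conv_rhs => rw [← Nat.div_add_mod m P]
  rw [show P * (m / P) + m % P = (m / P) * P + m % P by ring, gpow_period hloop]

/-- if `X` has an isolated point and `trans₀(G) ≠ ∅`, then `trans₀(G)`
contains an isolated point of `X`; if moreover `X` is infinite, exactly one. -/
theorem stmt1 [MetricSpace X] [CompactSpace X]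
    (G : Set (X × X)) (hGc : IsClosed G) (hGne : G.Nonempty)
    (hiso : ∃ x : X, IsOpen ({x} : Set X))
    (htr : (trans0 G).Nonempty) :
    (∃ x : X, IsOpen ({x} : Set X) ∧ x ∈ trans0 G) ∧
    (Infinite X → ∃! x : X, IsOpen ({x} : Set X) ∧ x ∈ trans0 G) := by
  obtain ⟨a, hao⟩ := hiso
  obtain ⟨t, ht⟩ := htr
  obtain ⟨n, hn⟩ := ht.2 {a} hao ⟨a, rfl⟩
  have heq : GPow G n t = {a} :=
    Set.eq_singleton_iff_nonempty_unique_mem.mpr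
      ⟨gpow_nonempty ht.1 n, fun y hy => Set.mem_singleton_iff.mp (hn hy)⟩
  obtain ⟨x0, hx0o, hx0t⟩ := exists_isolated G n t ht a hao heq
  refine ⟨⟨x0, hx0o, hx0t⟩, ?_⟩
  intro hInf
  refine ⟨x0, ⟨hx0o, hx0t⟩, ?_⟩
  rintro y ⟨hyo, hyt⟩
  by_contra hne'
  obtain ⟨p, hp⟩ := hx0t.2 {y} hyo ⟨y, rfl⟩
  have hpe : GPow G p x0 = {y} :=
    Set.eq_singleton_iff_nonempty_unique_mem.mpr
      ⟨gpow_nonempty hx0t.1 p, fun z hz => Set.mem_singleton_iff.mp (hp hz)⟩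
  obtain ⟨q, hq⟩ := hyt.2 {x0} hx0o ⟨x0, rfl⟩
  have hqe : GPow G q y = {x0} :=
    Set.eq_singleton_iff_nonempty_unique_mem.mpr
      ⟨gpow_nonempty hyt.1 q, fun z hz => Set.mem_singleton_iff.mp (hq hz)⟩
  have hloop : GPow G (p + q) x0 = {x0} := by
    rw [gpow_singleton_add hpe q]; exact hqe
  set P := p + q with hPdef
  have hP : 0 < P := by
    rcases Nat.eq_zero_or_pos P with h0 | h
    · exfalso
      have hp0 : p = 0 := by omega
      rw [hp0, gpow_zero] at hpe
      exact hne' (Set.singleton_eq_singleton_iff.mp hpe).symm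
    · exact h
  have hw : ∀ V : Set X, IsOpen V → V.Nonempty → V ⊆ (Set.univ : Set X) →
      ∃ m, m < P ∧ GPow G m x0 ⊆ V := by
    intro V hVo hVne _
    obtain ⟨m, hm⟩ := hx0t.2 V hVo hVne
    exact ⟨m % P, Nat.mod_lt _ hP, by rw [gpow_mod hloop]; exact hm⟩
  have hall : ∀ x : X, ∃ m, m < P ∧ GPow G m x0 = {x} := fun x =>
    shrink hx0t.1 isOpen_univ hw (Set.mem_univ x)
  choose f hf1 hf2 using hall
  haveI := hInf
  haveI : Finite X := by
    have hinj : Function.Injective (fun x : X => (⟨f x, hf1 x⟩ : Fin P)) := by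
      intro x x' h
      have hv : f x = f x' := congrArg Fin.val h
      have h2 := hf2 x'
      rw [← hv] at h2
      exact Set.singleton_eq_singleton_iff.mp ((hf2 x).symm.trans h2)
    exact Finite.of_injective _ hinj
  exact not_finite X
end

section
/- Let (X, G) be a CR-dynamical system and x ∈ X. (1) If x is not an isolated point of X, x ∈ trans_0(G), and (x, y) ∈ G, then y ∈ trans_0(G). (2) If X has no isolated points and x ∈ trans_0(G), then for every trajectory of x, every point in the orbit of that trajectory belongs to trans_0(G). -/
open Set Topology

variable {X : Type*}

lemma traj_mem_gpow {G : Set (X × X)} {x : X} {u : ℕ → X} (h : IsTraj G x u) (n : ℕ) :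
    u n ∈ GPow G n x :=
  ⟨u, h.1, rfl, fun i _ => h.2 i⟩

lemma gpow_shift {G : Set (X × X)} {x : X} {u : ℕ → X} (h : IsTraj G x u) (m N : ℕ) :
    u (m + N) ∈ GPow G N (u m) :=
  ⟨fun i => u (m + i), rfl, rfl, fun i _ => h.2 (m + i)⟩

lemma legal_of_forall_gpow_nonempty [MetricSpace X] [CompactSpace X]
    {G : Set (X × X)} (hGc : IsClosed G) {x : X}
    (h : ∀ n, (GPow G n x).Nonempty) : Legal G x := by
  set C : ℕ → Set (ℕ → X) := fun n => {p | p 0 = x ∧ ∀ i < n, (p i, p (i + 1)) ∈ G} with hC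
  have hC_closed : ∀ n, IsClosed (C n) := by
    intro n
    have : C n = {p : ℕ → X | p 0 = x} ∩ ⋂ i ∈ Set.Iio n,
        (fun p : ℕ → X => (p i, p (i + 1))) ⁻¹' G := by
      ext p; simp [hC, Set.mem_iInter]
    rw [this]
    exact (isClosed_eq (continuous_apply 0) continuous_const).inter
      (isClosed_biInter fun i _ =>
        hGc.preimage ((continuous_apply i).prodMk (continuous_apply (i + 1))))
  have hC_ne : ∀ n, (C n).Nonempty := by
    intro n
    obtain ⟨y, p, hp0, hpn, hpe⟩ := h n
    refine ⟨fun i => p (min i n), by simpa using hp0, fun i hi => ?_⟩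
    simp only []
    rw [show i ⊓ n = i from Nat.min_eq_left hi.le, show (i+1) ⊓ n = i+1 from Nat.min_eq_left hi]
    exact hpe i hi
  have hmono : ∀ n, C (n + 1) ⊆ C n := fun n p hp =>
    ⟨hp.1, fun i hi => hp.2 i (hi.trans (Nat.lt_succ_self n))⟩
  obtain ⟨p, hp⟩ := IsCompact.nonempty_iInter_of_sequence_nonempty_isCompact_isClosed C
    hmono hC_ne (hC_closed 0).isCompact hC_closed
  simp only [Set.mem_iInter] at hp
  exact ⟨p, (hp 0).1, fun n => (hp (n + 1)).2 n (Nat.lt_succ_self n)⟩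

lemma gpow_nonempty_isClosed [MetricSpace X] [CompactSpace X]
    {G : Set (X × X)} (hGc : IsClosed G) (N : ℕ) :
    IsClosed {z : X | (GPow G N z).Nonempty} := by
  have hset : {z : X | (GPow G N z).Nonempty} =
      (fun p : ℕ → X => p 0) '' {p | ∀ i < N, (p i, p (i + 1)) ∈ G} := by
    ext z
    constructor
    · rintro ⟨y, p, hp0, hpn, hpe⟩
      exact ⟨p, hpe, hp0⟩
    · rintro ⟨p, hpe, hp0⟩
      exact ⟨p N, p, hp0, rfl, hpe⟩
  rw [hset]
  have hcl : IsClosed {p : ℕ → X | ∀ i < N, (p i, p (i + 1)) ∈ G} := by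
    have : {p : ℕ → X | ∀ i < N, (p i, p (i + 1)) ∈ G} =
        ⋂ i ∈ Set.Iio N, (fun p : ℕ → X => (p i, p (i + 1))) ⁻¹' G := by
      ext p; simp [Set.mem_iInter]
    rw [this]
    exact isClosed_biInter fun i _ =>
      hGc.preimage ((continuous_apply i).prodMk (continuous_apply (i + 1)))
  exact (hcl.isCompact.image (continuous_apply 0)).isClosed

lemma succ_mem_trans0 [MetricSpace X] [CompactSpace X]
    {G : Set (X × X)} (hGc : IsClosed G) {x y : X}
    (hx_iso : ¬ IsOpen ({x} : Set X)) (hx : x ∈ trans0 G) (hxy : (x, y) ∈ G) :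
    y ∈ trans0 G := by
  obtain ⟨⟨u, hu⟩, hxt⟩ := hx
  constructor
  · -- y is legal
    apply legal_of_forall_gpow_nonempty hGc
    intro N
    by_contra hNe
    have hD_open : IsOpen {z : X | ¬ (GPow G N z).Nonempty} := by
      exact (gpow_nonempty_isClosed hGc (X := X) (G := G) N).isOpen_compl
    obtain ⟨m, hm⟩ := hxt _ hD_open ⟨y, hNe⟩
    exact hm (traj_mem_gpow hu m) ⟨u (m + N), gpow_shift hu m N⟩
  · -- transitivity
    intro U hU hUne
    have hVne : (U \ {x}).Nonempty := by
      by_contra hV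
      rw [Set.not_nonempty_iff_eq_empty, Set.diff_eq_empty] at hV
      obtain ⟨w, hw⟩ := hUne
      have hwx : w = x := hV hw
      have : U = {x} := Set.Subset.antisymm hV (by rintro z rfl; exact hwx ▸ hw)
      exact hx_iso (this ▸ hU)
    obtain ⟨m, hm⟩ := hxt (U \ {x}) (hU.sdiff isClosed_singleton) hVne
    have hm0 : m ≠ 0 := by
      rintro rfl
      exact (hm ⟨fun _ => x, rfl, rfl, by omega⟩).2 rfl
    obtain ⟨k, rfl⟩ := Nat.exists_eq_succ_of_ne_zero hm0
    refine ⟨k, fun z hz => ?_⟩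
    obtain ⟨p, hp0, hpk, hpe⟩ := hz
    have : z ∈ GPow G (k + 1) x := by
      refine ⟨fun i => if i = 0 then x else p (i - 1), by simp, by simpa using hpk, ?_⟩
      intro i hi
      rcases Nat.eq_zero_or_pos i with rfl | hpos
      · simpa [hp0] using hxy
      · obtain ⟨j, rfl⟩ := Nat.exists_eq_succ_of_ne_zero hpos.ne'
        simpa using hpe j (by omega)
    exact (hm this).1

/-- (1) if `x` is not isolated, `x ∈ trans₀(G)` and `(x,y) ∈ G`, then
`y ∈ trans₀(G)`; (2) if `X` has no isolated points and `x ∈ trans₀(G)`, then every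
point on every trajectory of `x` is in `trans₀(G)`. -/
theorem stmt2 [MetricSpace X] [CompactSpace X]
    (G : Set (X × X)) (hGc : IsClosed G) (hGne : G.Nonempty) :
    (∀ x y : X, ¬ IsOpen ({x} : Set X) → x ∈ trans0 G → (x, y) ∈ G → y ∈ trans0 G) ∧
    ((∀ z : X, ¬ IsOpen ({z} : Set X)) →
      ∀ x ∈ trans0 G, ∀ u : ℕ → X, IsTraj G x u → ∀ n : ℕ, u n ∈ trans0 G) := by
  constructor
  · exact fun x y hiso hx hxy => succ_mem_trans0 hGc hiso hx hxy
  · intro hall x hx u hu n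
    induction n with
    | zero => exact hu.1 ▸ hx
    | succ n ih => exact succ_mem_trans0 hGc (hall (u n)) ih (hu.2 n)
end

section
/- Let (X, G) be a CR-dynamical system. If X has no isolated points and trans_0(G) ≠ ∅, then trans_0(G) is dense in X. -/
open Set Topology

variable {X : Type*}

lemma gpow_concat {G : Set (X × X)} {x y : X} {k m : ℕ} (hy : y ∈ GPow G k x) :
    GPow G m y ⊆ GPow G (k + m) x := by
  rintro z ⟨q, hq0, hqm, hqs⟩
  obtain ⟨p, hp0, hpk, hps⟩ := hy
  refine ⟨fun i => if i < k then p i else q (i - k), ?_, ?_, ?_⟩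
  · by_cases h : 0 < k
    · simp [h, hp0]
    · have hk : k = 0 := by omega
      subst hk
      simp only [lt_irrefl, if_neg (lt_irrefl 0), Nat.sub_zero, hq0]
      rw [← hpk, hp0]
      simp
  · have h2 : ¬ (k + m < k) := by omega
    simp only [if_neg h2, Nat.add_sub_cancel_left, hqm]
  · intro i hi
    by_cases h1 : i + 1 < k
    · have h0 : i < k := by omega
      simp only [if_pos h0, if_pos h1]
      exact hps i h0
    · by_cases h0 : i < k
      · have hik : i + 1 = k := by omega
        simp only [if_pos h0, if_neg h1]
        have : q (i + 1 - k) = p (i + 1) := by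
          rw [hik, Nat.sub_self, hq0, ← hpk]
        rw [this]
        exact hps i h0
      · simp only [if_neg h0, if_neg h1]
        have h2 : i + 1 - k = (i - k) + 1 := by omega
        rw [h2]
        exact hqs (i - k) (by omega)

lemma open_diff_finite_nonempty [MetricSpace X]
    (hnoiso : ∀ x : X, ¬ IsOpen ({x} : Set X)) (F : Finset X) :
    ∀ U : Set X, IsOpen U → U.Nonempty → (U \ ↑F).Nonempty := by
  classical
  induction F using Finset.induction_on with
  | empty => intro U hU hne; simpa
  | @insert a s _ ih =>
    intro U hU hne
    have hU' : IsOpen (U \ {a}) := hU.sdiff isClosed_singleton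
    have hne' : (U \ {a}).Nonempty := by
      by_contra h
      have hsub : U ⊆ {a} := by
        intro z hz
        by_contra hz'
        exact h ⟨z, hz, hz'⟩
      have heq : U = {a} := hsub.antisymm (by
        rintro z rfl; obtain ⟨w, hw⟩ := hne; exact (hsub hw : w = z) ▸ hw)
      exact hnoiso a (heq ▸ hU)
    have := ih (U \ {a}) hU' hne'
    rwa [Set.diff_diff, ← Set.insert_eq, ← Finset.coe_insert] at this

/-- if `X` has no isolated points and `trans₀(G) ≠ ∅`, then
`trans₀(G)` is dense in `X`. -/
theorem stmt3 [MetricSpace X] [CompactSpace X]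
    (G : Set (X × X)) (hGc : IsClosed G) (hGne : G.Nonempty)
    (hnoiso : ∀ x : X, ¬ IsOpen ({x} : Set X))
    (htr : (trans0 G).Nonempty) :
    Dense (trans0 G) := by

  obtain ⟨x, hxleg, hxtr⟩ := htr
  obtain ⟨u, hu⟩ := hxleg
  have key : ∀ n : ℕ, u n ∈ trans0 G := by
    intro n
    constructor
    · exact ⟨fun i => u (n + i), rfl, fun i => by
        have := hu.2 (n + i); rwa [Nat.add_assoc] at this⟩
    · intro V hV hVne
      classical
      set F : Finset X := (Finset.range n).image u with hFdef
      obtain ⟨w, hwV, hwF⟩ :=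
        open_diff_finite_nonempty hnoiso F V hV hVne
      obtain ⟨m, hm⟩ := hxtr (V \ ↑F) (hV.sdiff F.finite_toSet.isClosed) ⟨w, hwV, hwF⟩
      have hmn : n ≤ m := by
        by_contra h
        have hmem : u m ∈ V \ ↑F := hm (traj_mem_gpow hu m)
        have hnm : m < n := by omega
        exact hmem.2 (Finset.mem_coe.mpr
          (Finset.mem_image.mpr ⟨m, Finset.mem_range.mpr hnm, rfl⟩))
      refine ⟨m - n, fun z hz => ?_⟩
      have hz' : z ∈ GPow G (n + (m - n)) x := gpow_concat (traj_mem_gpow hu n) hz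
      rw [Nat.add_sub_cancel' hmn] at hz'
      exact (hm hz').1
  rw [dense_iff_inter_open]
  intro U hU hUne
  obtain ⟨n, hn⟩ := hxtr U hU hUne
  exact ⟨u n, hn (traj_mem_gpow hu n), key n⟩
end

section
/- Let (X, G) be a CR-dynamical system and k ∈ {2, 3}. If y ∈ trans_k(G) and (x, y) ∈ G, then x ∈ trans_k(G). Consequently, T_{G⁻¹}(y)* ⊆ trans_k(G), where T_{G⁻¹}(y)* = ⋃_{n∈ℕ} (G⁻¹)^n(y) is the set of all endpoints of finite G-paths ending at y. -/
open Set Topology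

variable {X : Type*}

def prep (x : X) (u : ℕ → X) : ℕ → X := fun n => Nat.rec x (fun k _ => u k) n

lemma prep_zero (x : X) (u : ℕ → X) : prep x u 0 = x := rfl
lemma prep_succ (x : X) (u : ℕ → X) (n : ℕ) : prep x u (n + 1) = u n := rfl

lemma prep_traj {G : Set (X × X)} {x y : X} {u : ℕ → X}
    (hxy : (x, y) ∈ G) (hu : IsTraj G y u) : IsTraj G x (prep x u) := by
  refine ⟨rfl, fun n => ?_⟩
  cases n with
  | zero => simpa [prep_zero, prep_succ, hu.1] using hxy
  | succ m => simpa [prep_succ] using hu.2 m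

lemma range_subset_prep (x : X) (u : ℕ → X) : Set.range u ⊆ Set.range (prep x u) :=
  fun z ⟨n, hn⟩ => ⟨n + 1, hn⟩

lemma step2 [TopologicalSpace X] {G : Set (X × X)} {x y : X}
    (hy : y ∈ trans2 G) (hxy : (x, y) ∈ G) : x ∈ trans2 G := by
  obtain ⟨u, hu, hd⟩ := hy
  exact ⟨prep x u, prep_traj hxy hu, hd.mono (range_subset_prep x u)⟩

lemma step3 [TopologicalSpace X] {G : Set (X × X)} {x y : X}
    (hy : y ∈ trans3 G) (hxy : (x, y) ∈ G) : x ∈ trans3 G := by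
  obtain ⟨⟨u, hu⟩, hd⟩ := hy
  refine ⟨⟨prep x u, prep_traj hxy hu⟩, hd.mono ?_⟩
  rintro z hz
  simp only [Set.mem_iUnion] at hz ⊢
  obtain ⟨v, hv, hzv⟩ := hz
  exact ⟨prep x v, prep_traj hxy hv, range_subset_prep x v hzv⟩

lemma tstar_sub [TopologicalSpace X] {G : Set (X × X)}
    (T : Set X) (hT : ∀ x y : X, y ∈ T → (x, y) ∈ G → x ∈ T)
    {y : X} (hy : y ∈ T) : TStar (Ginv G) y ⊆ T := by
  intro z hz
  obtain ⟨n, hn⟩ := Set.mem_iUnion.1 hz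
  clear hz
  induction n generalizing z with
  | zero =>
    obtain ⟨p, hp0, hpn, _⟩ := hn
    rwa [← hpn, hp0]
  | succ m ih =>
    obtain ⟨p, hp0, hpn, hstep⟩ := hn
    have hpm : p m ∈ T := ih ⟨p, hp0, rfl, fun i hi => hstep i (Nat.lt_succ_of_lt hi)⟩
    have : (p m, p (m + 1)) ∈ Ginv G := hstep m (Nat.lt_succ_self m)
    rw [← hpn]
    exact hT _ _ hpm this

/-- for `k ∈ {2,3}`, if `y ∈ transₖ(G)` and `(x,y) ∈ G` then
`x ∈ transₖ(G)`; consequently `T_{G⁻¹}(y)* ⊆ transₖ(G)`. -/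
theorem stmt4 [MetricSpace X] [CompactSpace X]
    (G : Set (X × X)) (hGc : IsClosed G) (hGne : G.Nonempty) :
    (∀ x y : X, y ∈ trans2 G → (x, y) ∈ G → x ∈ trans2 G) ∧
    (∀ y ∈ trans2 G, TStar (Ginv G) y ⊆ trans2 G) ∧
    (∀ x y : X, y ∈ trans3 G → (x, y) ∈ G → x ∈ trans3 G) ∧
    (∀ y ∈ trans3 G, TStar (Ginv G) y ⊆ trans3 G) := by
  refine ⟨fun x y hy h => step2 hy h, fun y hy => tstar_sub _ (fun x y h h' => step2 h h') hy,
    fun x y hy h => step3 hy h, fun y hy => tstar_sub _ (fun x y h h' => step3 h h') hy⟩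
end

section
/- Let (X, G) be a CR-dynamical system and k ∈ {2, 3}. If trans_k(G) ∩ trans_k(G⁻¹) ≠ ∅, then: (1) trans_k(G) is dense in X; (2) trans_k(G⁻¹) is dense in X; and (3) every isolated point of X belongs to trans_k(G) ∩ trans_k(G⁻¹). -/
open Set Topology

variable {X : Type*}

lemma ginv_ginv {G : Set (X × X)} {x : X} {u : ℕ → X} (h : IsTraj G x u) :
    IsTraj (Ginv (Ginv G)) x u := h

lemma concat_aux {G : Set (X × X)} {x : X} {v u : ℕ → X}
    (hv : IsTraj (Ginv G) x v) (hu : IsTraj G x u) (m : ℕ) :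
    ∃ w : ℕ → X, IsTraj G (v m) w ∧ Set.range u ⊆ Set.range w := by
  refine ⟨fun k => if k ≤ m then v (m - k) else u (k - m), ⟨?_, ?_⟩, ?_⟩
  · simp
  · intro k
    by_cases h1 : k + 1 ≤ m
    · have hk : k ≤ m := by omega
      simp only [if_pos hk, if_pos h1]
      have h2 : m - (k + 1) + 1 = m - k := by omega
      have h3 := hv.2 (m - (k + 1))
      rw [h2] at h3
      exact h3
    · by_cases h2 : k ≤ m
      · have hk : k = m := by omega
        subst hk
        simp only [if_pos le_rfl, if_neg h1]
        rw [show k - k = 0 by omega, show k + 1 - k = 1 by omega, hv.1, ← hu.1]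
        exact hu.2 0
      · simp only [if_neg h2, if_neg h1]
        rw [show k + 1 - m = (k - m) + 1 by omega]
        exact hu.2 (k - m)
  · rintro y ⟨j, rfl⟩
    rcases Nat.eq_zero_or_pos j with hj | hj
    · subst hj
      exact ⟨m, by simp [hu.1, ← hv.1]⟩
    · refine ⟨m + j, ?_⟩
      have h : ¬ (m + j ≤ m) := by omega
      simp only [if_neg h]
      congr 1
      omega

lemma dense_isolated_mem {D : Set X} [TopologicalSpace X] (hD : Dense D) {x : X}
    (hx : IsOpen ({x} : Set X)) : x ∈ D := by
  obtain ⟨z, hz1, hz2⟩ := hD.inter_open_nonempty {x} hx ⟨x, rfl⟩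
  rwa [show z = x from hz1] at hz2

/-- for `k ∈ {2,3}`, if `transₖ(G) ∩ transₖ(G⁻¹) ≠ ∅` then both
`transₖ(G)` and `transₖ(G⁻¹)` are dense, and every isolated point lies in
`transₖ(G) ∩ transₖ(G⁻¹)`. -/
theorem stmt5 [MetricSpace X] [CompactSpace X]
    (G : Set (X × X)) (hGc : IsClosed G) (hGne : G.Nonempty) :
    ((trans2 G ∩ trans2 (Ginv G)).Nonempty →
      Dense (trans2 G) ∧ Dense (trans2 (Ginv G)) ∧
        ∀ x : X, IsOpen ({x} : Set X) → x ∈ trans2 G ∩ trans2 (Ginv G)) ∧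
    ((trans3 G ∩ trans3 (Ginv G)).Nonempty →
      Dense (trans3 G) ∧ Dense (trans3 (Ginv G)) ∧
        ∀ x : X, IsOpen ({x} : Set X) → x ∈ trans3 G ∩ trans3 (Ginv G)) := by
  constructor
  · rintro ⟨x, ⟨u, hu, hud⟩, ⟨v, hv, hvd⟩⟩
    have h2 : Set.range v ⊆ trans2 G := by
      rintro y ⟨m, rfl⟩
      obtain ⟨w, hw, hsub⟩ := concat_aux hv hu m
      exact ⟨w, hw, hud.mono hsub⟩
    have h2' : Set.range u ⊆ trans2 (Ginv G) := by
      rintro y ⟨m, rfl⟩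
      obtain ⟨w, hw, hsub⟩ := concat_aux (ginv_ginv hu) hv m
      exact ⟨w, hw, hvd.mono hsub⟩
    exact ⟨hvd.mono h2, hud.mono h2',
      fun y hy => ⟨h2 (dense_isolated_mem hvd hy), h2' (dense_isolated_mem hud hy)⟩⟩
  · rintro ⟨x, ⟨hxl, hxd⟩, ⟨hxl', hxd'⟩⟩
    have h3 : (⋃ v ∈ {v : ℕ → X | IsTraj (Ginv G) x v}, Set.range v) ⊆ trans3 G := by
      rintro y hy
      simp only [mem_iUnion, mem_setOf_eq] at hy
      obtain ⟨v, hv, m, rfl⟩ := hy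
      obtain ⟨u₀, hu₀⟩ := hxl
      obtain ⟨w₀, hw₀, _⟩ := concat_aux hv hu₀ m
      refine ⟨⟨w₀, hw₀⟩, hxd.mono ?_⟩
      rintro z hz
      simp only [mem_iUnion, mem_setOf_eq] at hz ⊢
      obtain ⟨u, hu, hz⟩ := hz
      obtain ⟨w, hw, hsub⟩ := concat_aux hv hu m
      exact ⟨w, hw, hsub hz⟩
    have h3' : (⋃ u ∈ {u : ℕ → X | IsTraj G x u}, Set.range u) ⊆ trans3 (Ginv G) := by
      rintro y hy
      simp only [mem_iUnion, mem_setOf_eq] at hy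
      obtain ⟨u, hu, m, rfl⟩ := hy
      obtain ⟨v₀, hv₀⟩ := hxl'
      obtain ⟨w₀, hw₀, _⟩ := concat_aux (ginv_ginv hu) hv₀ m
      refine ⟨⟨w₀, hw₀⟩, hxd'.mono ?_⟩
      rintro z hz
      simp only [mem_iUnion, mem_setOf_eq] at hz ⊢
      obtain ⟨v, hv, hz⟩ := hz
      obtain ⟨w, hw, hsub⟩ := concat_aux (ginv_ginv hu) hv m
      exact ⟨w, hw, hsub hz⟩
    exact ⟨hxd'.mono h3, hxd.mono h3',
      fun y hy => ⟨h3 (dense_isolated_mem hxd' hy), h3' (dense_isolated_mem hxd hy)⟩⟩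
end

section
/- Let (X, G) be a CR-dynamical system such that X has at least one isolated point. If trans_2(G) ≠ ∅, then there exists an isolated point x of X with x ∈ trans_2(G) such that T_{G⁻¹}(x)* = trans_2(G) = trans_3(G), where T_{G⁻¹}(x)* = ⋃_{n∈ℕ} (G⁻¹)^n(x). -/
open Set Topology

variable {X : Type*}

/-- Concatenate a finite `G`-path from `y` to `x` with a trajectory of `x`. -/
lemma concat_traj {G : Set (X × X)} {x y : X} {n : ℕ} {p : ℕ → X}
    (hp0 : p 0 = y) (hpn : p n = x) (hstep : ∀ i < n, (p i, p (i + 1)) ∈ G)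
    {v : ℕ → X} (hv : IsTraj G x v) :
    ∃ w : ℕ → X, IsTraj G y w ∧ Set.range v ⊆ Set.range w := by
  refine ⟨fun m => if m < n then p m else v (m - n), ⟨?_, ?_⟩, ?_⟩
  · by_cases h : 0 < n
    · simp [h, hp0]
    · have hn0 : n = 0 := by omega
      subst hn0
      simpa [hv.1, ← hp0] using hpn.symm
  · intro m
    by_cases h1 : m + 1 < n
    · have h2 : m < n := by omega
      simpa [h1, h2] using hstep m h2
    · by_cases h2 : m < n
      · have he : m + 1 = n := by omega
        have hval : v (m + 1 - n) = p (m + 1) := by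
          rw [he]; simp [hpn, hv.1]
        simp only [if_pos h2, if_neg h1, hval]
        exact hstep m h2
      · have e1 : m + 1 - n = (m - n) + 1 := by omega
        simp only [if_neg h1, if_neg h2, e1]
        exact hv.2 (m - n)
  · rintro z ⟨i, rfl⟩
    refine ⟨i + n, ?_⟩
    have : ¬ (i + n < n) := by omega
    simp [this]

lemma path_to_trans2 [TopologicalSpace X] {G : Set (X × X)} {x y : X} {n : ℕ} {p : ℕ → X}
    (hp0 : p 0 = y) (hpn : p n = x) (hstep : ∀ i < n, (p i, p (i + 1)) ∈ G)
    {v : ℕ → X} (hv : IsTraj G x v) (hd : Dense (Set.range v)) : y ∈ trans2 G := by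
  obtain ⟨w, hw, hsub⟩ := concat_traj hp0 hpn hstep hv
  exact ⟨w, hw, hd.mono hsub⟩

def tailSet (u : ℕ → X) (k : ℕ) : Set X := Set.range (fun n => u (n + k))

lemma tailSet_insert (u : ℕ → X) (k : ℕ) :
    tailSet u k = insert (u k) (tailSet u (k + 1)) := by
  ext z
  constructor
  · rintro ⟨n, rfl⟩
    cases n with
    | zero => left; simp
    | succ s =>
      right
      refine ⟨s, ?_⟩
      show u (s + (k + 1)) = u (s + 1 + k)
      congr 1; omega
  · rintro (rfl | ⟨s, rfl⟩)
    · exact ⟨0, by simp⟩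
    · refine ⟨s + 1, ?_⟩
      show u (s + 1 + k) = u (s + (k + 1))
      congr 1; omega

lemma exists_isolated_tail [TopologicalSpace X] [T1Space X] {u : ℕ → X}
    (hdense : Dense (Set.range u)) (hiso : ∃ x : X, IsOpen ({x} : Set X)) :
    ∃ m, IsOpen ({u m} : Set X) ∧ Dense (tailSet u m) := by
  classical
  have hT0 : Dense (tailSet u 0) := by
    have : tailSet u 0 = Set.range u := by
      ext z; constructor
      · rintro ⟨n, rfl⟩; exact ⟨n, rfl⟩
      · rintro ⟨n, rfl⟩; exact ⟨n, rfl⟩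
    rw [this]; exact hdense
  by_cases hall : ∀ k, Dense (tailSet u k)
  · obtain ⟨q, hq⟩ := hiso
    obtain ⟨z, hz1, hz2⟩ := hdense.exists_mem_open hq ⟨q, rfl⟩
    obtain ⟨m, rfl⟩ := hz1
    rw [Set.mem_singleton_iff] at hz2
    exact ⟨m, by rw [hz2]; exact hq, hall m⟩
  · push_neg at hall
    have hk0 := Nat.find_spec hall
    set k0 := Nat.find hall with hk0def
    have hk0pos : 0 < k0 := by
      rcases Nat.eq_zero_or_pos k0 with h | h
      · exact absurd (h ▸ hT0) hk0
      · exact h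
    set m := k0 - 1 with hm
    have hdm : Dense (tailSet u m) := not_not.mp (Nat.find_min hall (by omega))
    have hmsucc : m + 1 = k0 := by omega
    have hnd : ¬ Dense (tailSet u (m + 1)) := by rw [hmsucc]; exact hk0
    have huniv : insert (u m) (closure (tailSet u (m + 1))) = Set.univ := by
      have h := hdm.closure_eq
      rw [tailSet_insert, Set.insert_eq, closure_union, closure_singleton] at h
      rw [Set.insert_eq]; exact h
    have heq : ({u m} : Set X) = (closure (tailSet u (m + 1)))ᶜ := by
      ext z
      simp only [Set.mem_singleton_iff, Set.mem_compl_iff]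
      constructor
      · rintro rfl hmem
        apply hnd
        rw [dense_iff_closure_eq]
        apply Set.eq_univ_of_univ_subset
        rw [← huniv]
        rintro w (rfl | hw)
        · exact hmem
        · exact hw
      · intro hz
        have hzu : z ∈ insert (u m) (closure (tailSet u (m + 1))) :=
          huniv ▸ Set.mem_univ z
        rcases hzu with rfl | h
        · rfl
        · exact absurd h hz
    exact ⟨m, by rw [heq]; exact isOpen_compl_iff.mpr isClosed_closure, hdm⟩


/-- if `X` has an isolated point and `trans₂(G) ≠ ∅`, then there is an
isolated point `x ∈ trans₂(G)` with `T_{G⁻¹}(x)* = trans₂(G) = trans₃(G)`. -/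
theorem stmt9 [MetricSpace X] [CompactSpace X]
    (G : Set (X × X)) (hGc : IsClosed G) (hGne : G.Nonempty)
    (hiso : ∃ x : X, IsOpen ({x} : Set X))
    (htr : (trans2 G).Nonempty) :
    ∃ x : X, IsOpen ({x} : Set X) ∧ x ∈ trans2 G ∧
      TStar (Ginv G) x = trans2 G ∧ trans2 G = trans3 G := by
  classical
  obtain ⟨t, u, hu, hdense⟩ := htr
  obtain ⟨m, hopen, hdm⟩ := exists_isolated_tail hdense hiso
  set x := u m with hx
  set v : ℕ → X := fun n => u (n + m) with hv
  have hvtraj : IsTraj G x v := by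
    constructor
    · show u (0 + m) = u m
      congr 1; omega
    · intro n
      show (u (n + m), u (n + 1 + m)) ∈ G
      have e : n + 1 + m = n + m + 1 := by omega
      rw [e]
      exact hu.2 (n + m)
  have hdv : Dense (Set.range v) := hdm
  have hxtr : x ∈ trans2 G := ⟨v, hvtraj, hdv⟩
  refine ⟨x, hopen, hxtr, ?_, ?_⟩
  · -- TStar (Ginv G) x = trans2 G
    ext y
    constructor
    · intro hy
      obtain ⟨s, ⟨n, rfl⟩, hys⟩ := hy
      obtain ⟨p, hp0, hpn, hstep⟩ := hys
      -- reverse the path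
      refine path_to_trans2 (p := fun i => p (n - i)) (n := n) ?_ ?_ ?_ hvtraj hdv
      · show p (n - 0) = y; simpa using hpn
      · show p (n - n) = x; simpa using hp0
      · intro i hi
        have h := hstep (n - (i + 1)) (by omega)
        have e : n - (i + 1) + 1 = n - i := by omega
        rw [e] at h
        exact h
    · rintro ⟨w, hw, hd⟩
      obtain ⟨z, hz1, hz2⟩ := hd.exists_mem_open hopen ⟨x, rfl⟩
      rw [Set.mem_singleton_iff] at hz2
      obtain ⟨j, rfl⟩ := hz1
      refine Set.mem_iUnion.mpr ⟨j, ⟨fun i => w (j - i), ?_, ?_, ?_⟩⟩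
      · show w (j - 0) = x; simpa using hz2
      · show w (j - j) = y; simpa using hw.1
      · intro i hi
        show (w (j - (i + 1)), w (j - i)) ∈ G
        have e : j - (i + 1) + 1 = j - i := by omega
        rw [← e]
        exact hw.2 (j - (i + 1))
  · -- trans2 G = trans3 G
    ext y
    constructor
    · rintro ⟨w, hw, hd⟩
      refine ⟨⟨w, hw⟩, hd.mono ?_⟩
      intro z hz
      exact Set.mem_biUnion hw hz
    · rintro ⟨hleg, hd3⟩
      obtain ⟨z, hz1, hz2⟩ := hd3.exists_mem_open hopen ⟨x, rfl⟩
      rw [Set.mem_singleton_iff] at hz2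
      simp only [Set.mem_iUnion, Set.mem_setOf_eq] at hz1
      obtain ⟨w, hwtraj, j, hwj⟩ := hz1
      refine path_to_trans2 (p := w) (n := j) hwtraj.1 ?_ (fun i _ => hwtraj.2 i) hvtraj hdv
      rw [hwj, hz2]
end

section
/- Let (X, G) be a CR-dynamical system. If trans_2(G) ≠ ∅, then for every x ∈ trans_3(G) \ trans_2(G) and every n ∈ ℕ, ⋃_{k=0}^{n} G^k(x) ≠ X. (Equivalently, trans_3(G) \ trans_2(G) equals the set of (3, ω)-transitive points: no point of trans_3(G) \ trans_2(G) is (3, n)-transitive for any positive integer n.) -/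
open Set Topology

variable {X : Type*}

/-- if `trans₂(G) ≠ ∅`, then for every `x ∈ trans₃(G) \ trans₂(G)` and
every `n ∈ ℕ`, `⋃_{k ≤ n} G^k(x) ≠ X`. -/
theorem stmt11 [MetricSpace X] [CompactSpace X]
    (G : Set (X × X)) (hGc : IsClosed G) (hGne : G.Nonempty)
    (htr : (trans2 G).Nonempty) :
    ∀ x ∈ trans3 G \ trans2 G, ∀ n : ℕ,
      (⋃ k ≤ n, GPow G k x) ≠ Set.univ := by
  intro x hx n hcontra
  obtain ⟨y, u, hu, hdense⟩ := htr
  have hy : y ∈ ⋃ k ≤ n, GPow G k x := hcontra ▸ Set.mem_univ y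
  simp only [Set.mem_iUnion] at hy
  obtain ⟨k, -, p, hp0, hpk, hpstep⟩ := hy
  set v : ℕ → X := fun i => if i < k then p i else u (i - k) with hv
  have hrange : Set.range u ⊆ Set.range v := by
    intro z ⟨j, hj⟩
    exact ⟨j + k, by simp [hv, Nat.add_sub_cancel, hj]⟩
  have hv0 : v 0 = x := by
    by_cases h : 0 < k
    · simp [hv, h, hp0]
    · have hk0 : k = 0 := by omega
      simp [hv, hk0]
      rw [hu.1, ← hpk, hk0, hp0]
  have hvstep : ∀ m : ℕ, (v m, v (m + 1)) ∈ G := by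
    intro m
    rcases lt_trichotomy (m + 1) k with h | h | h
    · have hm : m < k := by omega
      simpa [hv, hm, h] using hpstep m hm
    · have hm : m < k := by omega
      have : v (m + 1) = u 0 := by simp [hv, h]
      rw [this, hu.1, ← hpk, ← h]
      simpa [hv, hm] using hpstep m hm
    · have hm : ¬ m < k := by omega
      have hm1 : ¬ m + 1 < k := by omega
      have : m + 1 - k = (m - k) + 1 := by omega
      simp only [hv, hm, hm1, if_false, this]
      exact hu.2 (m - k)
  exact hx.2 ⟨v, ⟨hv0, hvstep⟩, hdense.mono hrange⟩
end

section
/- Let (X, G) be a CR-dynamical system with trans_2(G) = ∅. If trans_3(G) is dense in X, then there exists x ∈ trans_3(G) such that ⋃_{k=0}^{n} G^k(x) ≠ X for every n ∈ ℕ (i.e., the set of (3, ω)-transitive points is nonempty). -/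
open Set Topology

variable {X : Type*}

/-- if `trans₂(G) = ∅` and `trans₃(G)` is dense, then some
`x ∈ trans₃(G)` satisfies `⋃_{k ≤ n} G^k(x) ≠ X` for every `n`. -/
theorem stmt12 [MetricSpace X] [CompactSpace X]
    (G : Set (X × X)) (hGc : IsClosed G) (hGne : G.Nonempty)
    (h2 : trans2 G = ∅) (h3 : Dense (trans3 G)) :
    ∃ x ∈ trans3 G, ∀ n : ℕ, (⋃ k ≤ n, GPow G k x) ≠ Set.univ := by
  by_contra hcon
  push_neg at hcon
  have H : ∀ a ∈ trans3 G, ∀ y : X, ∃ k, y ∈ GPow G k a := by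
    intro a ha y
    obtain ⟨n, hn⟩ := hcon a ha
    have hy : y ∈ ⋃ k ≤ n, GPow G k a := by rw [hn]; trivial
    simp only [Set.mem_iUnion] at hy
    obtain ⟨k, _, hk⟩ := hy
    exact ⟨k, hk⟩
  have hXne : Nonempty X := ⟨hGne.choose.1⟩
  obtain ⟨x₀, hx₀⟩ : (trans3 G).Nonempty := h3.nonempty
  obtain ⟨z, hz⟩ := TopologicalSpace.exists_dense_seq X
  have hball : ∀ j : ℕ, ∃ y, y ∈ trans3 G ∧
      y ∈ Metric.ball (z (Nat.unpair j).1) (1/(j+1 : ℝ)) := by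
    intro j
    have hpos : (0:ℝ) < 1/(j+1) := by positivity
    obtain ⟨y, hy1, hy2⟩ := h3.exists_mem_open Metric.isOpen_ball
      ⟨_, Metric.mem_ball_self hpos⟩
    exact ⟨y, hy1, hy2⟩
  choose b hb3 hbball using hball
  set d : ℕ → X := fun j => Nat.casesOn j x₀ b with hd
  have hd3 : ∀ j, d j ∈ trans3 G := by rintro (_|j); exacts [hx₀, hb3 j]
  have hdball : ∀ j : ℕ, d (j+1) ∈ Metric.ball (z (Nat.unpair j).1) (1/(j+1 : ℝ)) :=
    fun j => hbball j
  choose k hk using fun j => H (d j) (hd3 j) (d (j+1))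
  choose p hp0 hpk hpG using hk
  set N : ℕ → ℕ := fun j => Nat.rec 0 (fun i acc => acc + k i) j with hNdef
  have hNs : ∀ j, N (j+1) = N j + k j := fun j => rfl
  have hN0 : N 0 = 0 := rfl
  have hNmono : Monotone N := monotone_nat_of_le_succ (fun j => by rw [hNs]; omega)
  have hchain : ∀ l m, l ≤ m → N m ≤ N l → d m = d l := by
    intro l m hlm
    induction m, hlm using Nat.le_induction with
    | base => intro _; rfl
    | succ m hlm ih =>
      intro hNe
      have h1 : N l ≤ N m := hNmono hlm
      have h2' : N (m+1) = N m + k m := hNs m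
      have hk0 : k m = 0 := by omega
      have hdd : d (m+1) = d m := by rw [← hpk m, hk0, hp0 m]
      rw [hdd]
      exact ih (by omega)
  by_cases hstag : ∃ J, ∀ j, J ≤ j → k j = 0
  · -- degenerate case : X is a single point
    obtain ⟨J, hJ⟩ := hstag
    have hNconst : ∀ j, J ≤ j → N j = N J := by
      intro j hj
      induction j, hj using Nat.le_induction with
      | base => rfl
      | succ m hm ih =>
        have := hNs m
        have := hJ m hm
        omega
    have hconst : ∀ j, J ≤ j → d j = d J := by
      intro j hj
      exact hchain J j hj (le_of_eq (hNconst j hj))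
    have hsingle : ∀ x : X, x = d J := by
      intro x
      apply eq_of_forall_dist_le
      intro ε hε
      have hx := hz x
      rw [Metric.mem_closure_iff] at hx
      obtain ⟨y, ⟨i, rfl⟩, hyd⟩ := hx (ε/2) (by positivity)
      obtain ⟨m, hm⟩ := exists_nat_one_div_lt (show (0:ℝ) < ε/2 by positivity)
      set j := Nat.pair i (max m J) with hjd
      have hjm : max m J ≤ j := Nat.right_le_pair i (max m J)
      have h1 : dist (d (j+1)) (z i) < 1/(j+1 : ℝ) := by
        have h := hdball j
        rw [Metric.mem_ball] at h
        have e : (Nat.unpair j).1 = i := by rw [hjd, Nat.unpair_pair]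
        rwa [e] at h
      have hle : (1:ℝ)/(j+1) ≤ 1/(m+1) := by
        apply one_div_le_one_div_of_le (by positivity)
        have : (m:ℝ) ≤ j := by exact_mod_cast le_trans (le_max_left m J) hjm
        linarith
      have hdj : d (j+1) = d J := hconst (j+1) (by omega)
      have htri := dist_triangle x (z i) (d J)
      have h2'' : dist (z i) (d J) < ε/2 := by
        rw [dist_comm, ← hdj]
        linarith
      linarith
    obtain ⟨u, hu⟩ := (hd3 J).1
    have hmem : d J ∈ trans2 G := by
      refine ⟨u, hu, ?_⟩
      intro x
      have hx : x = d J := hsingle x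
      rw [hx, ← hu.1]
      exact subset_closure ⟨0, rfl⟩
    rw [h2] at hmem
    exact hmem
  · -- main case : build a dense trajectory of x₀
    push_neg at hstag
    have hub : ∀ n, ∃ j, n < N j := by
      intro n
      induction n with
      | zero =>
        obtain ⟨j, _, hkj⟩ := hstag 0
        exact ⟨j+1, by have := hNs j; omega⟩
      | succ n ih =>
        obtain ⟨j, hj⟩ := ih
        obtain ⟨j', hjj', hkj'⟩ := hstag j
        have h1 := hNmono hjj'
        exact ⟨j'+1, by have := hNs j'; omega⟩
    choose bd hbd using hub
    set Jf : ℕ → ℕ := fun n => Nat.findGreatest (fun j => N j ≤ n) (bd n) with hJf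
    have hJle : ∀ n, N (Jf n) ≤ n := fun n =>
      Nat.findGreatest_spec (P := fun j => N j ≤ n) (m := 0) (Nat.zero_le _)
        (by show N 0 ≤ n; rw [hN0]; exact Nat.zero_le n)
    have hJgt : ∀ n, n < N (Jf n + 1) := by
      intro n
      by_cases hc : Jf n + 1 ≤ bd n
      · by_contra hle
        push_neg at hle
        exact Nat.findGreatest_is_greatest (P := fun j => N j ≤ n)
          (Nat.lt_succ_self _) hc hle
      · push_neg at hc
        have h1 : N (bd n) ≤ N (Jf n + 1) := hNmono hc.le
        have h2' := hbd n
        omega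
    set u : ℕ → X := fun n => p (Jf n) (n - N (Jf n)) with hu
    have lemA : ∀ n j, N j ≤ n → n ≤ N (j+1) → u n = p j (n - N j) := by
      intro n j h1 h2'
      rcases lt_or_eq_of_le h2' with hlt | heq
      · have hj1 : j ≤ Jf n := by
          apply Nat.le_findGreatest (P := fun i => N i ≤ n) _ h1
          by_contra hbj
          push_neg at hbj
          have h3' := hNmono (le_of_lt hbj)
          have h4' := hbd n
          omega
        have hj2 : Jf n ≤ j := by
          by_contra hgt
          push_neg at hgt
          have h3' : N (j+1) ≤ N (Jf n) := hNmono hgt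
          have h4' := hJle n
          omega
        have hje : Jf n = j := le_antisymm hj2 hj1
        rw [hu]
        simp only [hje]
      · have hj1 : j + 1 ≤ Jf n := by
          apply Nat.le_findGreatest (P := fun i => N i ≤ n) _ (by omega)
          by_contra hbj
          push_neg at hbj
          have h3' := hNmono (le_of_lt hbj)
          have h4' := hbd n
          omega
        have h5' : N (j+1) ≤ N (Jf n) := hNmono hj1
        have hNm : N (Jf n) = n := by have := hJle n; omega
        have hdm : d (Jf n) = d (j+1) := hchain (j+1) (Jf n) hj1 (by omega)
        have he1 : u n = d (Jf n) := by
          rw [hu]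
          simp only [show n - N (Jf n) = 0 by omega]
          exact hp0 (Jf n)
        have hsj := hNs j
        rw [he1, hdm, ← hpk j]
        congr 1
        omega
    have hu0 : u 0 = x₀ := by
      have h := lemA 0 0 (Nat.le_refl 0) (Nat.zero_le _)
      rw [h, show 0 - N 0 = 0 from rfl, hp0]
      rfl
    have hstep : ∀ n, (u n, u (n+1)) ∈ G := by
      intro n
      have h1 := hJle n
      have h2' := hJgt n
      have e1 : u n = p (Jf n) (n - N (Jf n)) := lemA n (Jf n) h1 (le_of_lt h2')
      have e2 : u (n+1) = p (Jf n) (n+1 - N (Jf n)) := lemA (n+1) (Jf n) (by omega) (by omega)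
      have hsj := hNs (Jf n)
      have ht : n - N (Jf n) < k (Jf n) := by omega
      have he : n + 1 - N (Jf n) = (n - N (Jf n)) + 1 := by omega
      rw [e1, e2, he]
      exact hpG (Jf n) _ ht
    have hdu : ∀ j, d j ∈ Set.range u := by
      intro j
      refine ⟨N j, ?_⟩
      have h := lemA (N j) j (Nat.le_refl _) (hNmono (Nat.le_succ j))
      rw [h, Nat.sub_self]
      exact hp0 j
    have hdense : Dense (Set.range u) := by
      intro x
      rw [Metric.mem_closure_iff]
      intro ε hε
      have hx := hz x
      rw [Metric.mem_closure_iff] at hx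
      obtain ⟨y, ⟨i, rfl⟩, hyd⟩ := hx (ε/2) (by positivity)
      obtain ⟨m, hm⟩ := exists_nat_one_div_lt (show (0:ℝ) < ε/2 by positivity)
      set j := Nat.pair i m with hjd
      have hjm : m ≤ j := Nat.right_le_pair i m
      have hb1 : dist (d (j+1)) (z i) < 1/(j+1 : ℝ) := by
        have h := hdball j
        rw [Metric.mem_ball] at h
        have e : (Nat.unpair j).1 = i := by rw [hjd, Nat.unpair_pair]
        rwa [e] at h
      have hle : (1:ℝ)/(j+1) ≤ 1/(m+1) := by
        apply one_div_le_one_div_of_le (by positivity)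
        have : (m:ℝ) ≤ j := by exact_mod_cast hjm
        linarith
      refine ⟨d (j+1), hdu (j+1), ?_⟩
      have htri := dist_triangle x (z i) (d (j+1))
      have h2'' : dist (z i) (d (j+1)) < ε/2 := by
        rw [dist_comm]
        linarith
      linarith
    have hmem : x₀ ∈ trans2 G := ⟨u, ⟨hu0, hstep⟩, hdense⟩
    rw [h2] at hmem
    exact hmem
end

section
/- Let (X, G) be a CR-dynamical system. Then the set of all (3, n)-transitive points taken over all positive integers n, i.e. the set {x ∈ trans_3(G) \ trans_2(G) : ∃ n ∈ ℕ, ⋃_{k=0}^{n} G^k(x) = X}, is not dense in X. -/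
/-!
If the set `S` of such points were dense, pick `x ∈ S`. Every point of `S` reaches all of `X`,
so any two points of `S` are joined by `G`-paths; going from `x` to another point of `S` and back
gives a loop of positive length at `x` (if `S = {x}`, then `X = {x}` and `(x, x) ∈ G`). Hence any
point of `S` reaches any other in a positive number of steps, and concatenating such paths
through a countable dense subset of `S` produces a trajectory of `x` with dense orbit, so `x`
would be 2-transitive after all.
-/

open Set Topology

variable {X : Type*}

section
variable {G : Set (X × X)} {x y z : X}

theorem mem_gPow_zero : y ∈ GPow G 0 x ↔ y = x :=
  ⟨fun ⟨_, h0, h1, _⟩ => h1.symm.trans h0, fun h => ⟨fun _ => x, rfl, h.symm, by simp⟩⟩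

theorem mem_gPow_succ {n : ℕ} :
    y ∈ GPow G (n + 1) x ↔ ∃ x', (x, x') ∈ G ∧ y ∈ GPow G n x' := by
  constructor
  · rintro ⟨p, h0, hn, hp⟩
    exact ⟨p 1, h0 ▸ hp 0 n.succ_pos, fun i => p (i + 1), rfl, by simpa [Nat.add_comm] using hn,
      fun i hi => hp (i + 1) (by omega)⟩
  · rintro ⟨x', hxx', p, h0, hn, hp⟩
    refine ⟨fun i => Nat.casesOn i x p, rfl, hn, fun i hi => ?_⟩
    cases i with
    | zero => simpa [h0] using hxx'
    | succ i => exact hp i (by omega)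

theorem mem_gPow_add {m n : ℕ} (hy : y ∈ GPow G m x) (hz : z ∈ GPow G n y) :
    z ∈ GPow G (m + n) x := by
  induction m generalizing x with
  | zero => rwa [Nat.zero_add, ← mem_gPow_zero.1 hy]
  | succ m ih =>
    obtain ⟨x', hxx', hy'⟩ := mem_gPow_succ.1 hy
    rw [Nat.add_right_comm]
    exact mem_gPow_succ.2 ⟨x', hxx', ih hy'⟩

end

section
open TopologicalSpace
variable {G : Set (X × X)} {x : X}

/-- The trajectory is run by a machine whose state `(z, j, n)` records the current point `z`,
the current target `y j`, and a number `n` of steps in which `z` can still reach `y j`. -/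
theorem exists_isTraj_forall_mem_range (y : ℕ → X)
    (hy : ∀ j, ∃ n, y (j + 1) ∈ GPow G (n + 1) (y j)) :
    ∃ u, IsTraj G (y 0) u ∧ ∀ j, y j ∈ range u := by
  let Inv : X × ℕ × ℕ → Prop := fun s => y s.2.1 ∈ GPow G s.2.2 s.1
  have hnext : ∀ s, ∃ s' : X × ℕ × ℕ, Inv s → (s.1, s'.1) ∈ G ∧ Inv s' ∧
      (s.2.2 = 0 → s'.2.1 = s.2.1 + 1) ∧ ∀ k, s.2.2 = k + 1 → s'.2 = (s.2.1, k) := by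
    rintro ⟨z, j, _ | k⟩
    · obtain ⟨n, hn⟩ := hy j
      obtain ⟨z', hzz', hz'⟩ := mem_gPow_succ.1 hn
      exact ⟨(z', j + 1, n), fun hz =>
        ⟨mem_gPow_zero.1 hz ▸ hzz', hz', fun _ => rfl, by simp⟩⟩
    · by_cases hz : Inv (z, j, k + 1)
      · obtain ⟨z', hzz', hz'⟩ := mem_gPow_succ.1 hz
        exact ⟨(z', j, k), fun _ => ⟨hzz', hz', by simp, by simp⟩⟩
      · exact ⟨(z, j, k), fun h => absurd h hz⟩
  choose next hnext using hnext
  let s : ℕ → X × ℕ × ℕ := fun t => next^[t] (y 0, 0, 0)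
  have hs_succ : ∀ t, s (t + 1) = next (s t) := fun t => Function.iterate_succ_apply' _ _ _
  have hinv : ∀ t, Inv (s t) := by
    intro t
    induction t with
    | zero => exact mem_gPow_zero.2 rfl
    | succ t ih => exact hs_succ t ▸ (hnext _ ih).2.1
  have hcount : ∀ n t, (s t).2.2 = n →
      (s (t + n)).1 = y (s t).2.1 ∧ (s (t + n)).2 = ((s t).2.1, 0) := by
    intro n
    induction n with
    | zero =>
      intro t ht
      have h : y (s t).2.1 ∈ GPow G 0 (s t).1 := ht ▸ hinv t
      exact ⟨(mem_gPow_zero.1 h).symm, Prod.ext rfl ht⟩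
    | succ n ih =>
      intro t ht
      have h1 : (s (t + 1)).2 = ((s t).2.1, n) := hs_succ t ▸ (hnext _ (hinv t)).2.2.2 n ht
      obtain ⟨h2, h3⟩ := ih (t + 1) (by rw [h1])
      rw [h1] at h2 h3
      show (s (t + n + 1)).1 = _ ∧ (s (t + n + 1)).2 = _
      rw [← Nat.add_right_comm]
      exact ⟨h2, h3⟩
  have hvisit : ∀ j, ∃ t, (s t).2.1 = j := by
    intro j
    induction j with
    | zero => exact ⟨0, rfl⟩
    | succ j ih =>
      obtain ⟨t, rfl⟩ := ih
      obtain ⟨-, h⟩ := hcount _ t rfl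
      refine ⟨t + (s t).2.2 + 1, ?_⟩
      rw [hs_succ, (hnext _ (hinv _)).2.2.1 (by rw [h]), h]
  refine ⟨fun t => (s t).1, ⟨rfl, fun t => by
    simpa only [hs_succ] using (hnext _ (hinv t)).1⟩, fun j => ?_⟩
  obtain ⟨t, rfl⟩ := hvisit j
  exact ⟨_, (hcount _ t rfl).1⟩

theorem mem_trans2_of_countable_of_dense [TopologicalSpace X] {c : Set X} (hc : c.Countable)
    (hcd : Dense c) (hxc : x ∈ c)
    (hc_reach : ∀ a ∈ c, ∀ b ∈ c, ∃ n, b ∈ GPow G (n + 1) a) :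
    x ∈ trans2 G := by
  obtain ⟨d, rfl⟩ := hc.exists_eq_range ⟨x, hxc⟩
  let y : ℕ → X := fun j => Nat.casesOn j x d
  have hy : ∀ j, y j ∈ range d := by
    rintro (_ | j)
    exacts [hxc, mem_range_self j]
  obtain ⟨u, hu, hmem⟩ :=
    exists_isTraj_forall_mem_range y fun j => hc_reach _ (hy j) _ (hy (j + 1))
  exact ⟨u, hu, hcd.mono (range_subset_iff.2 fun j => hmem (j + 1))⟩

theorem exists_mem_gPow_succ_self [TopologicalSpace X] [T1Space X] {S : Set X} (hS : Dense S)
    (hxS : x ∈ S) (hx : Legal G x) (hS_reach : ∀ a ∈ S, ∀ b ∈ S, b ∈ TStar G a) :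
    ∃ n, x ∈ GPow G (n + 1) x := by
  by_cases h : ∃ x' ∈ S, x' ≠ x
  · obtain ⟨x', hx'S, hx'x⟩ := h
    obtain ⟨k, hk⟩ := mem_iUnion.1 (hS_reach x hxS x' hx'S)
    obtain ⟨m, hm⟩ := mem_iUnion.1 (hS_reach x' hx'S x hxS)
    obtain ⟨k, rfl⟩ : ∃ k', k = k' + 1 :=
      Nat.exists_eq_succ_of_ne_zero fun hk0 => hx'x (mem_gPow_zero.1 (hk0 ▸ hk))
    exact ⟨k + m, by simpa only [Nat.add_right_comm] using mem_gPow_add hk hm⟩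
  · push Not at h
    have hX : ∀ z, z = x := fun z => by simpa using (hS.mono h : Dense {x}) z
    obtain ⟨u, hu0, hu⟩ := hx
    exact ⟨0, mem_gPow_succ.2 ⟨u 1, hu0 ▸ hu 0, mem_gPow_zero.2 (hX _).symm⟩⟩

theorem mem_trans2_of_dense_of_forall_mem_tStar [TopologicalSpace X] [MetrizableSpace X]
    [SeparableSpace X] {S : Set X} (hS : Dense S) (hxS : x ∈ S) (hx : Legal G x)
    (hS_reach : ∀ a ∈ S, ∀ b ∈ S, b ∈ TStar G a) :
    x ∈ trans2 G := by
  obtain ⟨ℓ, hloop⟩ := exists_mem_gPow_succ_self hS hxS hx hS_reach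
  have hpos : ∀ a ∈ S, ∀ b ∈ S, ∃ n, b ∈ GPow G (n + 1) a := by
    intro a ha b hb
    obtain ⟨k, hk⟩ := mem_iUnion.1 (hS_reach a ha x hxS)
    obtain ⟨m, hm⟩ := mem_iUnion.1 (hS_reach x hxS b hb)
    have h := mem_gPow_add (mem_gPow_add hk hloop) hm
    exact ⟨k + ℓ + m, by rwa [show k + (ℓ + 1) + m = k + ℓ + m + 1 by omega] at h⟩
  obtain ⟨t, htS, htc, hSt⟩ :=
    (IsSeparable.of_separableSpace S).exists_countable_dense_subset
  have hcS : insert x t ⊆ S := insert_subset hxS htS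
  exact mem_trans2_of_countable_of_dense (htc.insert x)
    ((dense_closure.1 (hS.mono hSt)).mono (subset_insert x t)) (mem_insert x t)
    fun a ha b hb => hpos a (hcS ha) b (hcS hb)

end

theorem stmt13_general [MetricSpace X] [CompactSpace X]
    (G : Set (X × X)) (hGne : G.Nonempty) :
    ¬ Dense {x : X | x ∈ trans3 G \ trans2 G ∧
      ∃ n : ℕ, (⋃ k ≤ n, GPow G k x) = Set.univ} := by
  intro hS
  have : Nonempty X := ⟨hGne.some.1⟩
  obtain ⟨x, hxS⟩ := hS.nonempty
  refine hxS.1.2 (mem_trans2_of_dense_of_forall_mem_tStar hS hxS hxS.1.1.1 fun a ha b _ => ?_)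
  obtain ⟨n, hn⟩ := ha.2
  obtain ⟨k, -, hk⟩ := mem_iUnion₂.1 (hn.symm ▸ mem_univ b : b ∈ ⋃ k ≤ n, GPow G k a)
  exact mem_iUnion.2 ⟨k, hk⟩

/-- the set of `(3,n)`-transitive points (over all positive `n`),
i.e. `{x ∈ trans₃(G) \ trans₂(G) : ∃ n, ⋃_{k ≤ n} G^k(x) = X}`, is not dense. -/
theorem stmt13 [MetricSpace X] [CompactSpace X]
    (G : Set (X × X)) (hGc : IsClosed G) (hGne : G.Nonempty) :
    ¬ Dense {x : X | x ∈ trans3 G \ trans2 G ∧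
      ∃ n : ℕ, (⋃ k ≤ n, GPow G k x) = Set.univ} :=
  stmt13_general G hGne
end

section
/- Let (X, G) be a CR-dynamical system and suppose x is an isolated point of X with x ∈ trans_3(G). Then trans_3(G) = T_{G⁻¹}(x)*, where T_{G⁻¹}(x)* = ⋃_{n∈ℕ} (G⁻¹)^n(x). -/
open Set Topology

variable {X : Type*}

/-- if `x` is an isolated point with `x ∈ trans₃(G)`, then
`trans₃(G) = T_{G⁻¹}(x)*`. -/
theorem stmt14 [MetricSpace X] [CompactSpace X]
    (G : Set (X × X)) (hGc : IsClosed G) (hGne : G.Nonempty)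
    (x : X) (hx : IsOpen ({x} : Set X)) (hx3 : x ∈ trans3 G) :
    trans3 G = TStar (Ginv G) x := by
  obtain ⟨hxleg, hxd⟩ := hx3
  ext y
  simp only [TStar, mem_iUnion]
  constructor
  · rintro ⟨hyleg, hyd⟩
    obtain ⟨z, hz, hzx⟩ := hyd.exists_mem_open hx ⟨x, rfl⟩
    simp only [mem_iUnion, mem_setOf_eq] at hz
    obtain ⟨u, hu, k, hk⟩ := hz
    have hzx' : z = x := hzx
    refine ⟨k, fun i => u (k - i), ?_, ?_, ?_⟩
    · simp only [Nat.sub_zero]; rw [hk, hzx']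
    · simp [hu.1]
    · intro i hi
      show (u (k - (i + 1)), u (k - i)) ∈ G
      have h := hu.2 (k - (i + 1))
      have e : k - (i + 1) + 1 = k - i := by omega
      rwa [e] at h
  · rintro ⟨n, p, hp0, hpn, hps⟩
    have key : ∀ w : ℕ → X, IsTraj G x w →
        IsTraj G y (fun i => if i ≤ n then p (n - i) else w (i - n)) ∧
        Set.range w ⊆ Set.range (fun i => if i ≤ n then p (n - i) else w (i - n)) := by
      intro w hw
      have hval : ∀ k, (fun i => if i ≤ n then p (n - i) else w (i - n)) (n + k) = w k := by
        intro k
        rcases Nat.eq_zero_or_pos k with rfl | hk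
        · simp [hp0, hw.1]
        · have hnot : ¬ (n + k ≤ n) := by omega
          simp only [hnot, if_false]
          congr 1; omega
      constructor
      · constructor
        · simp [hpn]
        · intro i
          by_cases h1 : i + 1 ≤ n
          · have h2 : i ≤ n := by omega
            simp only [h1, h2, if_true]
            have h : (p (n - (i + 1) + 1), p (n - (i + 1))) ∈ G :=
              hps (n - (i + 1)) (by omega)
            have e : n - (i + 1) + 1 = n - i := by omega
            rwa [e] at h
          · by_cases h2 : i ≤ n
            · have hi : i = n := by omega
              subst hi
              simp only [h1, h2, if_true, if_false]
              have e0 : p (i - i) = w 0 := by rw [Nat.sub_self, hp0, hw.1]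
              have e1 : i + 1 - i = 1 := by omega
              rw [e0, e1]
              exact hw.2 0
            · simp only [h1, h2, if_false]
              have h := hw.2 (i - n)
              have e : i - n + 1 = i + 1 - n := by omega
              rwa [e] at h
      · rintro z ⟨k, rfl⟩
        exact ⟨n + k, hval k⟩
    obtain ⟨w, hw⟩ := hxleg
    refine ⟨⟨_, (key w hw).1⟩, hxd.mono ?_⟩
    intro z hz
    simp only [mem_iUnion, mem_setOf_eq] at hz ⊢
    obtain ⟨w', hw', hzr⟩ := hz
    exact ⟨_, (key w' hw').1, (key w' hw').2 hzr⟩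
end

section
/- Let (X, G) be a CR-dynamical system. If X has at least one isolated point and trans_3(G) ∩ trans_3(G⁻¹) is dense in X, then trans_2(G) = trans_3(G). -/
open Set Topology

variable {X : Type*}

/-! ### Auxiliary material -/

/-- Concatenation of two finite paths, switching from `p` to `q` after index `n`. -/
def pcat (n : ℕ) (p q : ℕ → X) : ℕ → X := fun i => if i ≤ n then p i else q (i - n)

lemma pcat_left {n : ℕ} {p q : ℕ → X} {i : ℕ} (h : i ≤ n) : pcat n p q i = p i := if_pos h

lemma pcat_right {n : ℕ} {p q : ℕ → X} (h : p n = q 0) (j : ℕ) :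
    pcat n p q (n + j) = q j := by
  rcases Nat.eq_zero_or_pos j with rfl | hj
  · simpa [pcat] using h
  · have hn : ¬ (n + j ≤ n) := by omega
    simp [pcat, hn]

lemma pcat_path {G : Set (X × X)} {n m : ℕ} {p q : ℕ → X}
    (hpq : p n = q 0)
    (hp : ∀ i < n, (p i, p (i + 1)) ∈ G) (hq : ∀ i < m, (q i, q (i + 1)) ∈ G) :
    ∀ i < n + m, (pcat n p q i, pcat n p q (i + 1)) ∈ G := by
  intro i hi
  by_cases h : i + 1 ≤ n
  · rw [pcat_left (by omega), pcat_left h]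
    exact hp i (by omega)
  · have hin : n ≤ i := by omega
    obtain ⟨j, rfl⟩ := Nat.exists_eq_add_of_le hin
    rw [show n + j + 1 = n + (j + 1) by ring, pcat_right hpq, pcat_right hpq]
    exact hq j (by omega)

lemma mem_of_dense_of_isolated [TopologicalSpace X] {a : X}
    (ha : IsOpen ({a} : Set X)) {S : Set X} (hS : Dense S) : a ∈ S := by
  obtain ⟨y, hyS, hy⟩ := hS.exists_mem_open ha ⟨a, rfl⟩
  rwa [show y = a from hy] at hyS

/-- From a `3`-transitive point there is a finite path to an isolated point. -/
lemma reach_isolated [TopologicalSpace X] {G : Set (X × X)} {a x : X}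
    (ha : IsOpen ({a} : Set X)) (hx : x ∈ trans3 G) :
    ∃ n, ∃ p : ℕ → X, p 0 = x ∧ p n = a ∧ ∀ i < n, (p i, p (i + 1)) ∈ G := by
  have h := mem_of_dense_of_isolated ha hx.2
  simp only [mem_iUnion, mem_setOf_eq, mem_range] at h
  obtain ⟨u, hu, m, hm⟩ := h
  exact ⟨m, u, hu.1, hm, fun i _ => hu.2 i⟩

/-- From an isolated point there is a finite path to any point that is
`3`-transitive for the inverse relation. -/
lemma from_isolated [TopologicalSpace X] {G : Set (X × X)} {a z : X}
    (ha : IsOpen ({a} : Set X)) (hz : z ∈ trans3 (Ginv G)) :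
    ∃ n, ∃ p : ℕ → X, p 0 = a ∧ p n = z ∧ ∀ i < n, (p i, p (i + 1)) ∈ G := by
  obtain ⟨n, q, hq0, hqn, hq⟩ := reach_isolated ha hz
  refine ⟨n, fun i => q (n - i), by simpa using hqn, by simpa using hq0, ?_⟩
  intro i hi
  have h1 : n - i = (n - (i + 1)) + 1 := by omega
  have h2 := hq (n - (i + 1)) (by omega)
  show (q (n - i), q (n - (i + 1))) ∈ G
  rw [h1]
  exact h2

/-- Existence of a nontrivial cycle at the isolated point. -/
lemma exists_cycle [MetricSpace X] {G : Set (X × X)} {a : X}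
    (ha : IsOpen ({a} : Set X)) (hGne : G.Nonempty)
    (hd : Dense (trans3 G ∩ trans3 (Ginv G))) :
    ∃ c, ∃ r : ℕ → X, 1 ≤ c ∧ r 0 = a ∧ r c = a ∧ ∀ i < c, (r i, r (i + 1)) ∈ G := by
  by_cases haa : (a, a) ∈ G
  · exact ⟨1, fun _ => a, le_refl 1, rfl, rfl, fun i _ => haa⟩
  · have hb : ∃ b : X, b ≠ a := by
      by_contra h
      push_neg at h
      obtain ⟨⟨x, y⟩, hxy⟩ := hGne
      rw [h x, h y] at hxy
      exact haa hxy
    obtain ⟨b, hb⟩ := hb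
    have hop : IsOpen ({a}ᶜ : Set X) := isClosed_singleton.isOpen_compl
    obtain ⟨z, hzD, hz⟩ := hd.exists_mem_open hop ⟨b, hb⟩
    obtain ⟨n1, p1, h10, h1n, h1e⟩ := from_isolated ha hzD.2
    obtain ⟨n2, p2, h20, h2n, h2e⟩ := reach_isolated ha hzD.1
    have hn1 : 1 ≤ n1 := by
      rcases Nat.eq_zero_or_pos n1 with h | h
      · exact absurd (by rw [← h1n, h, h10] : z = a) hz
      · exact h
    exact ⟨n1 + n2, pcat n1 p1 p2, by omega,
      by rw [pcat_left (Nat.zero_le _)]; exact h10,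
      by rw [pcat_right (h1n.trans h20.symm)]; exact h2n,
      pcat_path (h1n.trans h20.symm) h1e h2e⟩

/-- A loop at the isolated point of positive length passing through a given
nonempty open set. -/
lemma loop_through [MetricSpace X] {G : Set (X × X)} {a : X}
    (ha : IsOpen ({a} : Set X)) (hGne : G.Nonempty)
    (hd : Dense (trans3 G ∩ trans3 (Ginv G)))
    {U : Set X} (hU : IsOpen U) (hUne : U.Nonempty) :
    ∃ n, ∃ p : ℕ → X, 1 ≤ n ∧ p 0 = a ∧ p n = a ∧
      (∀ i < n, (p i, p (i + 1)) ∈ G) ∧ ∃ i ≤ n, p i ∈ U := by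
  obtain ⟨c, r, hc1, hr0, hrc, hre⟩ := exists_cycle ha hGne hd
  obtain ⟨z, hzD, hzU⟩ := hd.exists_mem_open hU hUne
  obtain ⟨n1, p1, h10, h1n, h1e⟩ := from_isolated ha hzD.2
  obtain ⟨n2, p2, h20, h2n, h2e⟩ := reach_isolated ha hzD.1
  have hpq1 : p1 n1 = p2 0 := h1n.trans h20.symm
  set q := pcat n1 p1 p2 with hqdef
  have hq0 : q 0 = a := by rw [hqdef, pcat_left (Nat.zero_le _)]; exact h10
  have hqend : q (n1 + n2) = a := by rw [hqdef, pcat_right hpq1]; exact h2n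
  have hqe : ∀ i < n1 + n2, (q i, q (i + 1)) ∈ G := pcat_path hpq1 h1e h2e
  have hpq2 : q (n1 + n2) = r 0 := hqend.trans hr0.symm
  refine ⟨n1 + n2 + c, pcat (n1 + n2) q r, by omega, ?_, ?_, ?_, ⟨n1, by omega, ?_⟩⟩
  · rw [pcat_left (Nat.zero_le _)]; exact hq0
  · rw [show n1 + n2 + c = (n1 + n2) + c from rfl, pcat_right hpq2]; exact hrc
  · exact pcat_path hpq2 hqe hre
  · rw [pcat_left (by omega), hqdef, pcat_left (le_refl n1), h1n]
    exact hzU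

/-- Cumulative lengths. -/
def cumL (N : ℕ → ℕ) : ℕ → ℕ
  | 0 => 0
  | k + 1 => cumL N k + N k

lemma cumL_mono (N : ℕ → ℕ) : ∀ {k m : ℕ}, k ≤ m → cumL N k ≤ cumL N m := by
  intro k m h
  induction m with
  | zero => rw [Nat.le_zero.mp h]
  | succ m ih =>
    rcases Nat.eq_or_lt_of_le h with rfl | h'
    · exact le_refl _
    · exact le_trans (ih (by omega)) (Nat.le_add_right _ _)

lemma le_cumL {N : ℕ → ℕ} (hN : ∀ k, 1 ≤ N k) : ∀ k, k ≤ cumL N k := by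
  intro k
  induction k with
  | zero => exact Nat.zero_le _
  | succ k ih => have := hN k; show k + 1 ≤ cumL N k + N k; omega

/-- Iterated concatenation of a sequence of finite paths. -/
def Apath (N : ℕ → ℕ) (P : ℕ → ℕ → X) : ℕ → ℕ → X
  | 0 => P 0
  | k + 1 => pcat (cumL N (k + 1)) (Apath N P k) (P (k + 1))

lemma Apath_spec {G : Set (X × X)} {a : X} {N : ℕ → ℕ} {P : ℕ → ℕ → X}
    (h0 : ∀ k, P k 0 = a) (hend : ∀ k, P k (N k) = a)
    (hedge : ∀ k, ∀ i < N k, (P k i, P k (i + 1)) ∈ G) :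
    ∀ k, Apath N P k 0 = a ∧ Apath N P k (cumL N (k + 1)) = a ∧
      ∀ i < cumL N (k + 1), (Apath N P k i, Apath N P k (i + 1)) ∈ G := by
  intro k
  induction k with
  | zero =>
    have h1 : cumL N 1 = N 0 := by show 0 + N 0 = N 0; omega
    refine ⟨h0 0, ?_, ?_⟩
    · show P 0 (cumL N 1) = a
      rw [h1]; exact hend 0
    · intro i hi
      rw [h1] at hi
      exact hedge 0 i hi
  | succ k ih =>
    obtain ⟨ih0, ihend, ihe⟩ := ih
    have hpq : Apath N P k (cumL N (k + 1)) = P (k + 1) 0 := by rw [ihend, h0]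
    refine ⟨?_, ?_, ?_⟩
    · show pcat (cumL N (k + 1)) (Apath N P k) (P (k + 1)) 0 = a
      rw [pcat_left (Nat.zero_le _)]; exact ih0
    · show pcat (cumL N (k + 1)) (Apath N P k) (P (k + 1))
        (cumL N (k + 1) + N (k + 1)) = a
      rw [pcat_right hpq]; exact hend (k + 1)
    · exact pcat_path hpq ihe (hedge (k + 1))

lemma Apath_agree {N : ℕ → ℕ} {P : ℕ → ℕ → X} :
    ∀ {k m : ℕ}, k ≤ m → ∀ {i : ℕ}, i ≤ cumL N (k + 1) → Apath N P m i = Apath N P k i := by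
  intro k m h
  induction m with
  | zero => intro i _; rw [Nat.le_zero.mp h]
  | succ m ih =>
    intro i hi
    rcases Nat.eq_or_lt_of_le h with rfl | h'
    · rfl
    · have hkm : k ≤ m := by omega
      have hstep : Apath N P (m + 1) i = Apath N P m i := by
        show pcat (cumL N (m + 1)) (Apath N P m) (P (m + 1)) i = _
        exact pcat_left (le_trans hi (cumL_mono N (by omega)))
      rw [hstep]
      exact ih hkm hi

lemma Apath_block {G : Set (X × X)} {a : X} {N : ℕ → ℕ} {P : ℕ → ℕ → X}
    (h0 : ∀ k, P k 0 = a) (hend : ∀ k, P k (N k) = a)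
    (hedge : ∀ k, ∀ i < N k, (P k i, P k (i + 1)) ∈ G) :
    ∀ k, ∀ i ≤ N k, Apath N P k (cumL N k + i) = P k i := by
  intro k i _
  cases k with
  | zero => show P 0 (0 + i) = P 0 i; rw [Nat.zero_add]
  | succ k =>
    show pcat (cumL N (k + 1)) (Apath N P k) (P (k + 1)) (cumL N (k + 1) + i) = P (k + 1) i
    have hpq : Apath N P k (cumL N (k + 1)) = P (k + 1) 0 := by
      rw [(Apath_spec h0 hend hedge k).2.1, h0]
    rw [pcat_right hpq]

lemma infinite_concat {G : Set (X × X)} {a : X} {N : ℕ → ℕ} {P : ℕ → ℕ → X}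
    (hN : ∀ k, 1 ≤ N k) (h0 : ∀ k, P k 0 = a) (hend : ∀ k, P k (N k) = a)
    (hedge : ∀ k, ∀ i < N k, (P k i, P k (i + 1)) ∈ G) :
    ∃ u : ℕ → X, IsTraj G a u ∧ ∀ k, ∀ i ≤ N k, ∃ j, u j = P k i := by
  refine ⟨fun i => Apath N P i i, ⟨?_, ?_⟩, ?_⟩
  · exact (Apath_spec h0 hend hedge 0).1
  · intro n
    have h1 : Apath N P (n + 1) n = Apath N P n n :=
      Apath_agree (Nat.le_succ n) (le_trans (Nat.le_succ n) (le_cumL hN (n + 1)))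
    show (Apath N P n n, Apath N P (n + 1) (n + 1)) ∈ G
    rw [← h1]
    exact (Apath_spec h0 hend hedge (n + 1)).2.2 n
      (lt_of_lt_of_le (by omega) (le_cumL hN (n + 2)))
  · intro k i hi
    refine ⟨cumL N k + i, ?_⟩
    have hj : cumL N k + i ≤ cumL N (k + 1) := by
      have h1 : cumL N (k + 1) = cumL N k + N k := rfl
      omega
    have hkj : k ≤ cumL N k + i := le_trans (le_cumL hN k) (Nat.le_add_right _ _)
    show Apath N P (cumL N k + i) (cumL N k + i) = P k i
    rw [Apath_agree hkj hj]
    exact Apath_block h0 hend hedge k i hi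

/-- The isolated point is `2`-transitive. -/
lemma isolated_trans2 [MetricSpace X] [CompactSpace X] {G : Set (X × X)} {a : X}
    (hGne : G.Nonempty) (ha : IsOpen ({a} : Set X))
    (hd : Dense (trans3 G ∩ trans3 (Ginv G))) : a ∈ trans2 G := by
  have hne : Nonempty X := ⟨a⟩
  obtain ⟨e, he⟩ := TopologicalSpace.exists_dense_seq X
  set W : ℕ → Set X := fun k =>
    Metric.ball (e k.unpair.1) (1 / (k.unpair.2 + 1)) with hW
  have hWo : ∀ k, IsOpen (W k) := fun k => Metric.isOpen_ball
  have hWne : ∀ k, (W k).Nonempty := fun k =>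
    ⟨e k.unpair.1, Metric.mem_ball_self (by positivity)⟩
  have hloop := fun k => loop_through ha hGne hd (hWo k) (hWne k)
  choose N P hN h0 hend hedge hhit using hloop
  obtain ⟨u, hu, hcov⟩ := infinite_concat hN h0 hend hedge
  refine ⟨u, hu, ?_⟩
  rw [Metric.dense_iff]
  intro x r hr
  obtain ⟨y, hyb, j, hj⟩ := Metric.dense_iff.mp he x (r / 2) (by positivity)
  obtain ⟨m, hm⟩ := exists_nat_one_div_lt (show (0 : ℝ) < r / 2 by positivity)
  obtain ⟨i, hiN, hiW⟩ := hhit (Nat.pair j m)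
  obtain ⟨jj, hjj⟩ := hcov (Nat.pair j m) i hiN
  refine ⟨u jj, ?_, ⟨jj, rfl⟩⟩
  rw [Metric.mem_ball]
  have h1 : dist (P (Nat.pair j m) i) (e j) < 1 / (m + 1) := by
    have := hiW
    rw [hW] at this
    simp only [Nat.unpair_pair] at this
    exact this
  have h2 : dist (e j) x < r / 2 := by
    rw [hj]
    exact Metric.mem_ball.mp hyb
  calc dist (u jj) x ≤ dist (u jj) (e j) + dist (e j) x := dist_triangle _ _ _
    _ < 1 / (m + 1) + r / 2 := by rw [hjj]; exact add_lt_add_of_lt_of_le h1 (le_of_lt h2) |>.trans_le (le_refl _)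
    _ < r / 2 + r / 2 := by linarith
    _ = r := by ring

/-- if `X` has an isolated point and `trans₃(G) ∩ trans₃(G⁻¹)` is dense,
then `trans₂(G) = trans₃(G)`. -/
theorem stmt15 [MetricSpace X] [CompactSpace X]
    (G : Set (X × X)) (hGc : IsClosed G) (hGne : G.Nonempty)
    (hiso : ∃ x : X, IsOpen ({x} : Set X))
    (hd : Dense (trans3 G ∩ trans3 (Ginv G))) :
    trans2 G = trans3 G := by
  obtain ⟨a, ha⟩ := hiso
  ext x
  constructor
  · rintro ⟨u, hu, hdu⟩
    refine ⟨⟨u, hu⟩, hdu.mono ?_⟩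
    intro y hy
    exact Set.mem_biUnion hu hy
  · intro hx
    obtain ⟨n, p, hp0, hpn, hpe⟩ := reach_isolated ha hx
    obtain ⟨v, hv, hvd⟩ := isolated_trans2 hGne ha hd
    have hpq : p n = v 0 := by rw [hpn, hv.1]
    refine ⟨pcat n p v, ⟨?_, ?_⟩, ?_⟩
    · rw [pcat_left (Nat.zero_le _)]; exact hp0
    · intro i
      by_cases h : i + 1 ≤ n
      · rw [pcat_left (by omega), pcat_left h]
        exact hpe i (by omega)
      · have hin : n ≤ i := by omega
        obtain ⟨j, rfl⟩ := Nat.exists_eq_add_of_le hin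
        rw [show n + j + 1 = n + (j + 1) by ring, pcat_right hpq, pcat_right hpq]
        exact hv.2 j
    · refine hvd.mono ?_
      rintro y ⟨j, hj⟩
      exact ⟨n + j, by rw [pcat_right hpq]; exact hj⟩
end

section
/- Let (X, G) be a CR-dynamical system. If trans_2(G) ≠ trans_3(G), then X \ trans_2(G) is dense in X. Consequently, if the interior of trans_2(G) is nonempty, then trans_2(G) = trans_3(G). -/
open Set Topology

variable {X : Type*}

/-- if `trans₂(G) ≠ trans₃(G)` then `X \ trans₂(G)` is dense;
consequently if `trans₂(G)` has nonempty interior then `trans₂(G) = trans₃(G)`. -/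
theorem stmt16 [MetricSpace X] [CompactSpace X]
    (G : Set (X × X)) (hGc : IsClosed G) (hGne : G.Nonempty) :
    (trans2 G ≠ trans3 G → Dense ((trans2 G)ᶜ)) ∧
    ((interior (trans2 G)).Nonempty → trans2 G = trans3 G) := by
  have hconcat : ∀ (x : X) (u v : ℕ → X) (n : ℕ), IsTraj G x u → IsTraj G (u n) v →
      ∃ w : ℕ → X, IsTraj G x w ∧ ∀ i, w (n + i) = v i := by
    intro x u v n hu hv
    refine ⟨fun i => if i < n then u i else v (i - n), ⟨?_, ?_⟩, ?_⟩
    · by_cases h : 0 < n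
      · simp [h, hu.1]
      · have hn : n = 0 := by omega
        subst hn; simp [hv.1, hu.1]
    · intro i
      rcases lt_trichotomy (i + 1) n with h | h | h
      · have hi : i < n := by omega
        simp only [if_pos hi, if_pos h]
        exact hu.2 i
      · have hi : i < n := by omega
        have h2 : ¬ (i + 1 < n) := by omega
        have h3 : i + 1 - n = 0 := by omega
        simp only [if_pos hi, if_neg h2, h3, hv.1]
        exact h ▸ hu.2 i
      · have h1 : ¬ i < n := by omega
        have h2 : ¬ i + 1 < n := by omega
        have h3 : i + 1 - n = (i - n) + 1 := by omega
        simp only [if_neg h1, if_neg h2, h3]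
        exact hv.2 (i - n)
    · intro i
      have h1 : ¬ n + i < n := by omega
      simp [h1]
  have h23 : (interior (trans2 G)).Nonempty → trans2 G = trans3 G := by
    rintro ⟨z, hz⟩
    apply Set.Subset.antisymm
    · rintro x ⟨u, hu, hd⟩
      refine ⟨⟨u, hu⟩, hd.mono ?_⟩
      exact Set.subset_biUnion_of_mem (u := fun u => Set.range u) hu
    · rintro x ⟨hleg, hd⟩
      obtain ⟨y, hy1, hy2⟩ := hd.exists_mem_open isOpen_interior ⟨z, hz⟩
      simp only [Set.mem_iUnion, Set.mem_range, Set.mem_setOf_eq] at hy1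
      obtain ⟨u, hu, n, hn⟩ := hy1
      obtain ⟨v, hv, hvd⟩ := interior_subset hy2
      rw [← hn] at hv
      obtain ⟨w, hw, hwv⟩ := hconcat x u v n hu hv
      refine ⟨w, hw, hvd.mono ?_⟩
      rintro p ⟨i, rfl⟩
      exact ⟨n + i, hwv i⟩
  refine ⟨?_, h23⟩
  intro hne
  rw [← interior_eq_empty_iff_dense_compl]
  by_contra h
  exact hne (h23 (Set.nonempty_iff_ne_empty.mpr h))
end

section
/- Let (X, G) be a CR-dynamical system and x ∈ X. If T_G(x)* ⊆ trans_3(G), where T_G(x)* = ⋃_{n∈ℕ} G^n(x), then x ∈ trans_2(G). Consequently: (a) if G = G⁻¹ then trans_2(G) = trans_3(G); and (b) if trans_3(G⁻¹) ⊆ trans_3(G) then trans_3(G⁻¹) ⊆ trans_2(G). -/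
open Set Topology

variable {X : Type*}

lemma prepend {G : Set (X × X)} {p w : ℕ → X} {n : ℕ}
    (hpE : ∀ i < n, (p i, p (i + 1)) ∈ G) (hw : IsTraj G (p n) w) :
    ∃ v : ℕ → X, IsTraj G (p 0) v ∧ (∀ j ≤ n, v j = p j) ∧ ∀ m, v (n + m) = w m := by
  refine ⟨fun j => if j ≤ n then p j else w (j - n), ⟨by simp, ?_⟩, ?_, ?_⟩
  · intro i
    rcases lt_trichotomy i n with hi | rfl | hi
    · simp only [hi.le, if_pos, Nat.succ_le_of_lt hi]
      simpa [hi.le, Nat.succ_le_of_lt hi] using hpE i hi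
    · have h1 : ¬ (i + 1 ≤ i) := by omega
      have h2 : i + 1 - i = 1 := by omega
      simpa [h1, h2, hw.1] using hw.2 0
    · have h1 : ¬ (i ≤ n) := by omega
      have h2 : ¬ (i + 1 ≤ n) := by omega
      have h3 : i + 1 - n = (i - n) + 1 := by omega
      simpa [h1, h2, h3] using hw.2 (i - n)
  · intro j hj; simp [hj]
  · intro m
    rcases Nat.eq_zero_or_pos m with rfl | hm
    · simp [hw.1]
    · have h1 : ¬ (n + m ≤ n) := by omega
      simp [h1]


lemma gpow_rev {G : Set (X × X)} {x y : X} {n : ℕ} (h : y ∈ GPow G n x) :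
    x ∈ GPow (Ginv G) n y := by
  obtain ⟨p, hp0, hpn, hpE⟩ := h
  refine ⟨fun i => p (n - i), by simp [hpn], by simp [hp0], ?_⟩
  intro i hi
  have h1 : n - i - 1 + 1 = n - i := by omega
  have h2 : n - (i + 1) = n - i - 1 := by omega
  have := hpE (n - i - 1) (by omega)
  rw [h1] at this
  simpa [Ginv, h2] using this

lemma trans3_of_path [TopologicalSpace X] {G : Set (X × X)} {x y : X} {n : ℕ}
    (hx : x ∈ trans3 G) (hpath : x ∈ GPow G n y) : y ∈ trans3 G := by
  obtain ⟨p, hp0, hpn, hpE⟩ := hpath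
  subst hp0
  constructor
  · obtain ⟨u, hu⟩ := hx.1
    rw [← hpn] at hu
    obtain ⟨v, hv, -, -⟩ := prepend hpE hu
    exact ⟨v, hv⟩
  · refine hx.2.mono ?_
    intro z hz
    simp only [mem_iUnion, mem_setOf_eq] at hz ⊢
    obtain ⟨u, hu, m, hm⟩ := hz
    rw [← hpn] at hu
    obtain ⟨v, hv, -, hvm⟩ := prepend hpE hu
    exact ⟨v, hv, m + n, by rw [Nat.add_comm, hvm]; exact hm⟩

lemma key [MetricSpace X] [CompactSpace X] {G : Set (X × X)} (x : X)
    (h : TStar G x ⊆ trans3 G) : x ∈ trans2 G := by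
  classical
  -- countable basis enumeration
  obtain ⟨b, hbc, hbne, hbB⟩ := TopologicalSpace.exists_countable_basis X
  have hbnonempty : b.Nonempty := by
    obtain ⟨v, hv, -, -⟩ := hbB.exists_subset_of_mem_open (mem_univ x) isOpen_univ
    exact ⟨v, hv⟩
  obtain ⟨B, hB⟩ := hbc.exists_eq_range hbnonempty
  have hBopen : ∀ k, IsOpen (B k) := fun k => hbB.isOpen (hB ▸ mem_range_self k)
  have hBne : ∀ k, (B k).Nonempty := fun k => by
    have : B k ∈ b := hB ▸ mem_range_self k
    rcases eq_empty_or_nonempty (B k) with he | hne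
    · exact absurd (he ▸ this) hbne
    · exact hne
  -- x itself is 3-transitive
  have hx3 : x ∈ trans3 G := h (mem_iUnion.2 ⟨0, fun _ => x, rfl, rfl, by omega⟩)
  obtain ⟨u0, hu0⟩ := hx3.1
  -- step
  have step : ∀ (k : ℕ) (q : {q : ℕ × (ℕ → X) // IsTraj G x q.2}),
      ∃ q' : {q : ℕ × (ℕ → X) // IsTraj G x q.2},
        q.1.1 < q'.1.1 ∧ (∀ j ≤ q.1.1, q'.1.2 j = q.1.2 j) ∧
        ∃ m ≤ q'.1.1, q'.1.2 m ∈ B k := by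
    rintro k ⟨⟨n, p⟩, hp⟩
    have hyT : p n ∈ TStar G x :=
      mem_iUnion.2 ⟨n, p, hp.1, rfl, fun i _ => hp.2 i⟩
    have hy3 := h hyT
    obtain ⟨z, hzB, hzU⟩ := dense_iff_inter_open.1 hy3.2 (B k) (hBopen k) (hBne k)
    simp only [mem_iUnion, mem_setOf_eq] at hzU
    obtain ⟨w, hw, m0, hm0⟩ := hzU
    obtain ⟨v, hv, hvagree, hvm⟩ := prepend (fun i _ => hp.2 i) hw
    rw [hp.1] at hv
    refine ⟨⟨⟨n + m0 + 1, v⟩, hv⟩, ?_, ?_, n + m0, ?_, ?_⟩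
    · show n < n + m0 + 1; omega
    · intro j hj; exact hvagree j hj
    · show n + m0 ≤ n + m0 + 1; omega
    · show v (n + m0) ∈ B k
      rw [hvm m0, hm0]; exact hzB
  -- build the chain
  let F : ℕ → {q : ℕ × (ℕ → X) // IsTraj G x q.2} := fun k =>
    Nat.rec ⟨⟨0, u0⟩, hu0⟩ (fun k prev => Classical.choose (step k prev)) k
  have hF : ∀ k, F (k + 1) = Classical.choose (step k (F k)) := fun k => rfl
  set nn : ℕ → ℕ := fun k => (F k).1.1 with hnn
  set P : ℕ → (ℕ → X) := fun k => (F k).1.2 with hP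
  have hTraj : ∀ k, IsTraj G x (P k) := fun k => (F k).2
  have hlt : ∀ k, nn k < nn (k + 1) := fun k => by
    rw [hnn]; simp only; rw [hF k]; exact (Classical.choose_spec (step k (F k))).1
  have hagree : ∀ k, ∀ j ≤ nn k, P (k + 1) j = P k j := fun k => by
    rw [hnn, hP]; simp only; rw [hF k]; exact (Classical.choose_spec (step k (F k))).2.1
  have hhit : ∀ k, ∃ m ≤ nn (k + 1), P (k + 1) m ∈ B k := fun k => by
    rw [hnn, hP]; simp only; rw [hF k]; exact (Classical.choose_spec (step k (F k))).2.2
  have hmono2 : Monotone nn := monotone_nat_of_le_succ (fun k => (hlt k).le)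
  have hmono : ∀ a b, a ≤ b → nn a ≤ nn b := fun a b hab => hmono2 hab
  have hge : ∀ k, k ≤ nn k := by
    intro k
    induction k with
    | zero => omega
    | succ k ih => have := hlt k; omega
  have hagree' : ∀ a b, a ≤ b → ∀ j ≤ nn a, P b j = P a j := by
    intro a b hab
    induction b with
    | zero => intro j hj; have : a = 0 := by omega
              subst this; rfl
    | succ b ih =>
      intro j hj
      rcases Nat.lt_or_ge a (b + 1) with hlt' | hge'
      · have hab' : a ≤ b := by omega
        rw [hagree b j (le_trans hj (hmono a b hab')), ih hab' j hj]
      · have : a = b + 1 := by omega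
        subst this; rfl
  refine ⟨fun j => P j j, ⟨(hTraj 0).1, ?_⟩, ?_⟩
  · intro j
    have h1 : P (j + 1) j = P j j := hagree' j (j + 1) (by omega) j (hge j)
    show (P j j, P (j + 1) (j + 1)) ∈ G
    rw [← h1]
    exact (hTraj (j + 1)).2 j
  · rw [dense_iff_inter_open]
    intro U hU hUne
    obtain ⟨zz, hzz⟩ := hUne
    obtain ⟨v, hv, hzv, hvU⟩ := hbB.exists_subset_of_mem_open hzz hU
    rw [hB] at hv
    obtain ⟨k, hk⟩ := hv
    obtain ⟨m, hm, hmB⟩ := hhit k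
    have humP : P m m = P (k + 1) m := by
      rcases le_or_gt m (k + 1) with hle | hlt'
      · exact (hagree' m (k + 1) hle m (hge m)).symm
      · exact hagree' (k + 1) m hlt'.le m hm
    refine ⟨P m m, hvU ?_, mem_range_self m⟩
    rw [humP, ← hk]; exact hmB

/-- if `T_G(x)* ⊆ trans₃(G)` then `x ∈ trans₂(G)`; consequently
(a) if `G = G⁻¹` then `trans₂(G) = trans₃(G)`, and
(b) if `trans₃(G⁻¹) ⊆ trans₃(G)` then `trans₃(G⁻¹) ⊆ trans₂(G)`. -/
theorem stmt17 [MetricSpace X] [CompactSpace X]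
    (G : Set (X × X)) (hGc : IsClosed G) (hGne : G.Nonempty) :
    (∀ x : X, TStar G x ⊆ trans3 G → x ∈ trans2 G) ∧
    (G = Ginv G → trans2 G = trans3 G) ∧
    (trans3 (Ginv G) ⊆ trans3 G → trans3 (Ginv G) ⊆ trans2 G) := by
  have main : ∀ x : X, TStar G x ⊆ trans3 G → x ∈ trans2 G := fun x hx => key x hx
  refine ⟨main, ?_, ?_⟩
  · intro hsym
    ext x
    constructor
    · rintro ⟨u, hu, hd⟩
      exact ⟨⟨u, hu⟩, hd.mono (subset_biUnion_of_mem hu)⟩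
    · intro hx
      apply main
      intro y hy
      obtain ⟨n, hn⟩ := mem_iUnion.1 hy
      have := gpow_rev hn
      rw [← hsym] at this
      exact trans3_of_path hx this
  · intro hsub x hx
    apply main
    intro y hy
    obtain ⟨n, hn⟩ := mem_iUnion.1 hy
    exact hsub (trans3_of_path hx (gpow_rev hn))
end

section
/- Let (X, G) be a CR-dynamical system such that X has at least one isolated point. Then trans_3(G) is dense in X if, and only if, trans_3(G⁻¹) is dense in X. -/
/-!
An isolated point `x₀` of `X` lies in every dense set, so it is `3`-transitive and lies on a
trajectory of every `3`-transitive point. The orbits of a `3`-transitive point `x` are dense and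
all their points other than `x` have a `G`-predecessor, so by compactness of `G` every point other
than `x` has one; hence every point is legal for `G⁻¹`. A point `z` on an orbit of `x₀` is
reachable from every `3`-transitive point `y`, and reversing a `G`-path from `y` to `z` and
extending it backwards yields a `G⁻¹`-trajectory of `z` through `y`. So the dense set of such `z`
lies in `trans₃(G⁻¹)`, and `(G⁻¹)⁻¹ = G` gives the converse.
-/

open Set Topology

variable {X : Type*}

namespace GPow

variable {G : Set (X × X)}

lemma mem_zero_iff {x y : X} : y ∈ GPow G 0 x ↔ y = x :=
  ⟨fun ⟨_, hp0, hpn, _⟩ => hpn ▸ hp0, fun h => ⟨fun _ => x, rfl, h.symm, by simp⟩⟩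

lemma mem_succ_iff {n : ℕ} {x z : X} :
    z ∈ GPow G (n + 1) x ↔ ∃ y ∈ GPow G n x, (y, z) ∈ G := by
  constructor
  · rintro ⟨p, hp0, hpn, hpG⟩
    exact ⟨p n, ⟨p, hp0, rfl, fun i hi => hpG i (by omega)⟩, hpn ▸ hpG n n.lt_succ_self⟩
  · rintro ⟨y, ⟨p, hp0, hpn, hpG⟩, hyz⟩
    refine ⟨Function.update p (n + 1) z, by simpa using hp0, by simp, fun i hi => ?_⟩
    rcases Nat.lt_succ_iff_lt_or_eq.mp hi with hi | rfl
    · simpa [Function.update_of_ne (Nat.lt_succ_of_lt hi).ne,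
        Function.update_of_ne (Nat.succ_lt_succ hi).ne] using hpG i hi
    · simpa [hpn] using hyz

end GPow

section Reachability

variable {G : Set (X × X)}

lemma mem_tStar_iff_reflTransGen {x y : X} :
    y ∈ TStar G x ↔ Relation.ReflTransGen (fun a b => (a, b) ∈ G) x y := by
  simp only [TStar, mem_iUnion]
  constructor
  · rintro ⟨n, hn⟩
    induction n generalizing y with
    | zero => exact GPow.mem_zero_iff.mp hn ▸ .refl
    | succ n ih =>
      obtain ⟨z, hz, hzy⟩ := GPow.mem_succ_iff.mp hn
      exact (ih hz).tail hzy
  · intro h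
    induction h with
    | refl => exact ⟨0, GPow.mem_zero_iff.mpr rfl⟩
    | tail _ hbc ih =>
      obtain ⟨n, hn⟩ := ih
      exact ⟨n + 1, GPow.mem_succ_iff.mpr ⟨_, hn, hbc⟩⟩

lemma tStar_trans {x y z : X} (hxy : y ∈ TStar G x) (hyz : z ∈ TStar G y) : z ∈ TStar G x := by
  rw [mem_tStar_iff_reflTransGen] at *
  exact hxy.trans hyz

lemma IsTraj.range_subset_tStar {x : X} {u : ℕ → X} (hu : IsTraj G x u) :
    range u ⊆ TStar G x := by
  rintro _ ⟨n, rfl⟩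
  exact mem_iUnion.mpr ⟨n, u, hu.1, rfl, fun i _ => hu.2 i⟩

lemma biUnion_range_isTraj_subset_tStar (x : X) :
    ⋃ u ∈ {u : ℕ → X | IsTraj G x u}, range u ⊆ TStar G x :=
  iUnion₂_subset fun _ hu => IsTraj.range_subset_tStar hu

lemma IsTraj.range_subset_insert_image_snd {x : X} {u : ℕ → X} (hu : IsTraj G x u) :
    range u ⊆ insert x (Prod.snd '' G) := by
  rintro _ ⟨_ | n, rfl⟩
  · exact .inl hu.1
  · exact .inr ⟨_, hu.2 n, rfl⟩

lemma IsTraj.cons {x y : X} {v : ℕ → X} (hv : IsTraj G y v) (hxy : (x, y) ∈ G) :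
    IsTraj G x (fun | 0 => x | i + 1 => v i) :=
  ⟨rfl, fun | 0 => by simpa [hv.1] using hxy | i + 1 => hv.2 i⟩

lemma mem_ginv {a b : X} : (a, b) ∈ Ginv G ↔ (b, a) ∈ G := Iff.rfl

@[simp] lemma ginv_ginv_s18 : Ginv (Ginv G) = G := rfl

lemma IsClosed.ginv [TopologicalSpace X] (hG : IsClosed G) : IsClosed (Ginv G) :=
  hG.preimage continuous_swap

lemma legal_ginv_of_forall_exists_pred (hpred : ∀ w, ∃ p, (p, w) ∈ G) (x : X) :
    Legal (Ginv G) x := by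
  choose f hf using hpred
  refine ⟨fun n => f^[n] x, rfl, fun n => ?_⟩
  simpa only [mem_ginv, Function.iterate_succ_apply'] using hf _

lemma exists_isTraj_ginv_through (hpred : ∀ w, ∃ p, (p, w) ∈ G) {w z : X}
    (hz : z ∈ TStar G w) : ∃ v, IsTraj (Ginv G) z v ∧ w ∈ range v := by
  induction mem_tStar_iff_reflTransGen.mp hz with
  | refl =>
    obtain ⟨v, hv⟩ := legal_ginv_of_forall_exists_pred hpred w
    exact ⟨v, hv, 0, hv.1⟩
  | tail hwy hyz ih =>
    obtain ⟨v, hv, n, hn⟩ := ih (mem_tStar_iff_reflTransGen.mpr hwy)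
    exact ⟨_, hv.cons hyz, n + 1, hn⟩

end Reachability

section Transitivity

variable [TopologicalSpace X] {G : Set (X × X)}

lemma mem_of_dense_of_isOpen_singleton {s : Set X} (hs : Dense s) {x : X}
    (hx : IsOpen ({x} : Set X)) : x ∈ s := by
  obtain ⟨y, rfl, hy⟩ := hs.inter_open_nonempty _ hx (singleton_nonempty x)
  exact hy

lemma exists_pred_of_mem_trans3 [T2Space X] [CompactSpace X] (hG : IsClosed G) {x w : X}
    (hx : x ∈ trans3 G) (hw : w ≠ x) : ∃ p, (p, w) ∈ G := by
  have hclosed : IsClosed (insert x (Prod.snd '' G)) :=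
    isClosed_singleton.union (hG.isCompact.image continuous_snd).isClosed
  have hsub : ⋃ u ∈ {u : ℕ → X | IsTraj G x u}, range u ⊆ insert x (Prod.snd '' G) :=
    iUnion₂_subset fun _ hu => IsTraj.range_subset_insert_image_snd hu
  obtain ⟨⟨p, _⟩, hp, rfl⟩ := ((hclosed.closure_subset_iff.mpr hsub) (hx.2 w)).resolve_left hw
  exact ⟨p, hp⟩

lemma exists_pred_of_dense_trans3 [T2Space X] [CompactSpace X] (hG : IsClosed G)
    (hd : Dense (trans3 G)) (w : X) : ∃ p, (p, w) ∈ G := by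
  by_cases h : trans3 G ⊆ {w}
  · have hX : ∀ y : X, y = w := fun y => by simpa using hd.mono h y
    obtain ⟨x, ⟨u, hu⟩, -⟩ := hd.nonempty_iff.mpr ⟨w⟩
    exact ⟨u 0, hX (u 1) ▸ hu.2 0⟩
  · obtain ⟨x, hx, hxw⟩ := not_subset.mp h
    exact exists_pred_of_mem_trans3 hG hx (Ne.symm hxw)

lemma mem_trans3_ginv_of_forall_mem_tStar (hpred : ∀ w, ∃ p, (p, w) ∈ G) {s : Set X}
    (hs : Dense s) {z : X} (hz : ∀ y ∈ s, z ∈ TStar G y) : z ∈ trans3 (Ginv G) := by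
  refine ⟨legal_ginv_of_forall_exists_pred hpred z, dense_iff_inter_open.mpr fun V hV hVne => ?_⟩
  obtain ⟨y, hyV, hys⟩ := hs.inter_open_nonempty V hV hVne
  obtain ⟨v, hv, hyv⟩ := exists_isTraj_ginv_through hpred (hz y hys)
  exact ⟨y, hyV, mem_biUnion hv hyv⟩

lemma dense_trans3_ginv [T2Space X] [CompactSpace X] (hG : IsClosed G) {x₀ : X}
    (hx₀ : IsOpen ({x₀} : Set X)) (hd : Dense (trans3 G)) : Dense (trans3 (Ginv G)) := by
  have hx₀G : x₀ ∈ trans3 G := mem_of_dense_of_isOpen_singleton hd hx₀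
  have hreach : ∀ y ∈ trans3 G, x₀ ∈ TStar G y := fun y hy =>
    biUnion_range_isTraj_subset_tStar y (mem_of_dense_of_isOpen_singleton hy.2 hx₀)
  refine hx₀G.2.mono fun z hz => mem_trans3_ginv_of_forall_mem_tStar
    (exists_pred_of_dense_trans3 hG hd) hd fun y hy => ?_
  exact tStar_trans (hreach y hy) (biUnion_range_isTraj_subset_tStar x₀ hz)

end Transitivity

theorem stmt18_general [MetricSpace X] [CompactSpace X]
    (G : Set (X × X)) (hGc : IsClosed G)
    (hiso : ∃ x : X, IsOpen ({x} : Set X)) :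
    Dense (trans3 G) ↔ Dense (trans3 (Ginv G)) := by
  obtain ⟨x₀, hx₀⟩ := hiso
  refine ⟨dense_trans3_ginv hGc hx₀, fun h => ?_⟩
  simpa only [ginv_ginv_s18] using dense_trans3_ginv hGc.ginv hx₀ h

/-- if `X` has an isolated point, then `trans₃(G)` is dense iff
`trans₃(G⁻¹)` is dense. -/
theorem stmt18 [MetricSpace X] [CompactSpace X]
    (G : Set (X × X)) (hGc : IsClosed G) (hGne : G.Nonempty)
    (hiso : ∃ x : X, IsOpen ({x} : Set X)) :
    Dense (trans3 G) ↔ Dense (trans3 (Ginv G)) :=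
  stmt18_general G hGc hiso
end
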